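/- arXiv:2510.11311 — 5 statements merged into one kernel-verified Lean document; each statement's English description precedes it below -/
import Mathlib

section
/- No one-directed complete bipartite graph is avoidable: for every one-directed complete bipartite graph F there is NO function d_F : ℕ → ℕ such that for every k, every digraph with minimum out-degree at least d_F(k) contains an F-free subdigraph of minimum out-degree at least k. -/
/-- A digraph: a set of vertices together with arcs (ordered pairs of
distinct vertices) between them, inside an ambient vertex type `α`. -/
structure Digraph' (α : Type) where
  verts : Set α
  Adj : α → α → Prop
  ne_of_adj : ∀ ⦃u v : α⦄, Adj u v → u ≠ v
  mem_verts_left : ∀ ⦃u v : α⦄, Adj u v → u ∈ verts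
  mem_verts_right : ∀ ⦃u v : α⦄, Adj u v → v ∈ verts

namespace Digraph'

variable {α β : Type}

/-- The out-neighbourhood of a vertex. -/
def outNbrs (D : Digraph' α) (v : α) : Set α := {u | D.Adj v u}

/-- The in-neighbourhood of a vertex. -/
def inNbrs (D : Digraph' α) (v : α) : Set α := {u | D.Adj u v}

/-- The set `s` has at least `k` elements (also meaningful for infinite sets). -/
def AtLeast (s : Set α) (k : ℕ) : Prop := ∃ t : Finset α, ↑t ⊆ s ∧ k ≤ t.card

/-- Every vertex of `D` has out-degree at least `k`, i.e. `δ⁺(D) ≥ k`. -/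
def MinOutDegAtLeast (D : Digraph' α) (k : ℕ) : Prop :=
  ∀ v ∈ D.verts, AtLeast (D.outNbrs v) k

/-- `D'` is a subdigraph of `D`. -/
def IsSubdigraph (D' D : Digraph' α) : Prop :=
  D'.verts ⊆ D.verts ∧ ∀ ⦃u v : α⦄, D'.Adj u v → D.Adj u v

/-- `D` contains a copy of the pattern digraph `F` (a pattern digraph has
vertex set all of its ambient type). -/
def HasCopy (D : Digraph' α) (F : Digraph' β) : Prop :=
  ∃ f : β → α, Function.Injective f ∧ (∀ w : β, f w ∈ D.verts) ∧
    ∀ ⦃u v : β⦄, F.Adj u v → D.Adj (f u) (f v)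

/-- The digraph `F` is avoidable: there is `d_F : ℕ → ℕ` such that every
(nonempty) digraph of minimum out-degree at least `d_F k` contains an
`F`-free subdigraph of minimum out-degree at least `k`. -/
def Avoidable (F : Digraph' β) : Prop :=
  ∃ dF : ℕ → ℕ, ∀ (α : Type) (D : Digraph' α) (k : ℕ), D.verts.Nonempty →
    D.MinOutDegAtLeast (dF k) →
    ∃ D' : Digraph' α, D'.IsSubdigraph D ∧ D'.verts.Nonempty ∧
      D'.MinOutDegAtLeast k ∧ ¬ D'.HasCopy F

end Digraph'

open Digraph'

/-- The one-directed complete bipartite graph with colour classes of sizes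
`a` and `b`, all arcs directed from the first class to the second. -/
def oneDirKbip (a b : ℕ) : Digraph' (Fin a ⊕ Fin b) where
  verts := Set.univ
  Adj u v := (∃ i : Fin a, u = Sum.inl i) ∧ ∃ j : Fin b, v = Sum.inr j
  ne_of_adj := by rintro u v ⟨⟨i, rfl⟩, ⟨j, rfl⟩⟩; simp
  mem_verts_left := fun _ _ _ => Set.mem_univ _
  mem_verts_right := fun _ _ _ => Set.mem_univ _

/-!
Fix `d` and a depth `n`. The forcing digraph consists of a `d`-ary out-tree of depth `n + 1`
together with a pool of `d` vertices: every leaf points to the whole pool and every pool vertex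
points to all `d` vertices of the first level, so it has minimum out-degree `d`. Let `D` be a
subdigraph of minimum out-degree `k = a + b`. Following arcs from any vertex of `D` reaches the
first level, and from there `D` contains at least `k ^ n` leaves, each with at least `b`
out-neighbours in the pool. If `k ^ n > (d choose b) (a - 1)`, some `b`-subset of the pool is
chosen by `a` of these leaves, which gives a one-directed `K_{a,b}`. Taking `d = d_F (a + b)` and
`n = d + a` contradicts avoidability.
-/

open Finset

namespace Digraph'

variable {α : Type} {s : Set α} {j k : ℕ}

theorem AtLeast.mono (h : AtLeast s k) (hjk : j ≤ k) : AtLeast s j :=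
  let ⟨t, hts, hkt⟩ := h
  ⟨t, hts, hjk.trans hkt⟩

theorem AtLeast.exists_card_eq (h : AtLeast s k) : ∃ t : Finset α, ↑t ⊆ s ∧ #t = k := by
  obtain ⟨t, hts, hkt⟩ := h
  obtain ⟨t', ht't, hcard⟩ := exists_subset_card_eq hkt
  exact ⟨t', (coe_subset.2 ht't).trans hts, hcard⟩

theorem AtLeast.le_card_of_subset {u : Finset α} (h : AtLeast s k) (hsu : s ⊆ ↑u) : k ≤ #u := by
  obtain ⟨t, hts, hkt⟩ := h
  exact hkt.trans (card_le_card (coe_subset.1 (hts.trans hsu)))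

theorem atLeast_of_injective {f : Fin k → α} (hf : Function.Injective f) (hs : ∀ i, f i ∈ s) :
    AtLeast s k :=
  ⟨univ.map ⟨f, hf⟩, by simpa [Set.subset_def] using hs, by simp⟩

variable {D : Digraph' α} {v : α}

theorem MinOutDegAtLeast.mono (h : D.MinOutDegAtLeast k) (hjk : j ≤ k) :
    D.MinOutDegAtLeast j :=
  fun v hv => (h v hv).mono hjk

theorem MinOutDegAtLeast.exists_adj (h : D.MinOutDegAtLeast k) (hk : 1 ≤ k) (hv : v ∈ D.verts) :
    ∃ u, D.Adj v u := by
  obtain ⟨t, hts, hkt⟩ := h v hv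
  obtain ⟨u, hu⟩ := card_pos.1 (by omega : 0 < #t)
  exact ⟨u, hts hu⟩

theorem hasCopy_oneDirKbip_of_forall_adj (A B : Finset α) (hA : A.Nonempty) (hB : B.Nonempty)
    (hAB : ∀ x ∈ A, ∀ y ∈ B, D.Adj x y) : D.HasCopy (oneDirKbip #A #B) := by
  let f : Fin #A → α := fun i => A.equivFin.symm i
  let g : Fin #B → α := fun j => B.equivFin.symm j
  have hadj : ∀ i j, D.Adj (f i) (g j) := fun i j =>
    hAB _ (A.equivFin.symm i).2 _ (B.equivFin.symm j).2
  refine ⟨Sum.elim f g, ?_, ?_, ?_⟩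
  · exact (Subtype.val_injective.comp A.equivFin.symm.injective).sumElim
      (Subtype.val_injective.comp B.equivFin.symm.injective) fun i j => D.ne_of_adj (hadj i j)
  · rintro (i | j)
    · exact D.mem_verts_left (hadj i ⟨0, hB.card_pos⟩)
    · exact D.mem_verts_right (hadj ⟨0, hA.card_pos⟩ j)
  · rintro _ _ ⟨⟨i, rfl⟩, j, rfl⟩
    exact hadj i j

/-- Pigeonhole over the `b`-subsets of the pool `P`. -/
theorem hasCopy_oneDirKbip_of_card_lt {a b : ℕ} (ha : 1 ≤ a) (hb : 1 ≤ b) (S P : Finset α)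
    (hS : ∀ y ∈ S, AtLeast (D.outNbrs y ∩ ↑P) b) (hcard : (#P).choose b * (a - 1) < #S) :
    D.HasCopy (oneDirKbip a b) := by
  classical
  have hB : ∀ y ∈ S, ∃ B ∈ P.powersetCard b, ∀ q ∈ B, D.Adj y q := by
    intro y hy
    obtain ⟨B, hBs, hBcard⟩ := (hS y hy).exists_card_eq
    exact ⟨B, mem_powersetCard.2 ⟨fun q hq => (hBs hq).2, hBcard⟩, fun q hq => (hBs hq).1⟩
  choose! B hBP hBadj using hB
  obtain ⟨B₀, hB₀, hfiber⟩ :=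
    exists_lt_card_fiber_of_mul_lt_card_of_maps_to hBP (by rwa [card_powersetCard])
  have hB₀card : #B₀ = b := (mem_powersetCard.1 hB₀).2
  obtain ⟨A, hA, hAcard⟩ := exists_subset_card_eq (show a ≤ #{y ∈ S | B y = B₀} by omega)
  have hAB : ∀ x ∈ A, ∀ q ∈ B₀, D.Adj x q := by
    intro x hx q hq
    obtain ⟨hxS, hxB⟩ := mem_filter.1 (hA hx)
    exact hBadj x hxS q (hxB ▸ hq)
  have hcopy := hasCopy_oneDirKbip_of_forall_adj A B₀
    (card_pos.1 (by omega)) (card_pos.1 (by omega)) hAB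
  rwa [hAcard, hB₀card] at hcopy

end Digraph'

open Digraph'

/-- Tree nodes are the lists of length at most `n + 1`, a child being obtained by `cons`;
the pool is `Fin d`. -/
def forcer (d n : ℕ) : Digraph' (List (Fin d) ⊕ Fin d) where
  verts := {v | v.elim (fun x => x.length ≤ n + 1) fun _ => True}
  Adj u v := match u, v with
    | .inl x, .inl y => x.length ≤ n ∧ ∃ c, y = c :: x
    | .inl x, .inr _ => x.length = n + 1
    | .inr _, .inl y => y.length = 1
    | .inr _, .inr _ => False
  ne_of_adj := by
    rintro (x | p) (y | q) h
    · obtain ⟨-, c, rfl⟩ := h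
      intro hxy
      simpa using congrArg List.length (Sum.inl_injective hxy)
    · simp
    · simp
    · exact h.elim
  mem_verts_left := by
    rintro (x | p) (y | q) h
    · exact Nat.le_succ_of_le h.1
    · exact h.le
    all_goals trivial
  mem_verts_right := by
    rintro (x | p) (y | q) h
    · obtain ⟨hx, c, rfl⟩ := h
      exact Nat.succ_le_succ hx
    · trivial
    · exact (h : y.length = 1).trans_le (by omega)
    · exact h.elim

namespace forcer

variable {d n k : ℕ}

theorem minOutDegAtLeast (d n : ℕ) : (forcer d n).MinOutDegAtLeast d := by
  rintro (x | p) hv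
  · rcases (show x.length ≤ n + 1 from hv).lt_or_eq with hlt | heq
    · refine atLeast_of_injective (f := fun c => .inl (c :: x)) ?_ fun c => ?_
      · intro c c' h
        simpa using h
      · exact ⟨Nat.le_of_lt_succ hlt, c, rfl⟩
    · exact atLeast_of_injective (f := Sum.inr) Sum.inr_injective fun _ => heq
  · refine atLeast_of_injective (f := fun c => .inl [c]) ?_ fun _ => rfl
    intro c c' h
    simpa using h

theorem inl_nil_mem_verts : (Sum.inl [] : List (Fin d) ⊕ Fin d) ∈ (forcer d n).verts :=
  Nat.zero_le _

variable {D : Digraph' (List (Fin d) ⊕ Fin d)}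

open Classical in
theorem le_card_children (hD : D.IsSubdigraph (forcer d n)) (hk : D.MinOutDegAtLeast k)
    {x : List (Fin d)} (hx : .inl x ∈ D.verts) (hlen : x.length ≤ n) :
    k ≤ #{c | D.Adj (.inl x) (.inl (c :: x))} := by
  refine ((hk _ hx).le_card_of_subset ?_).trans (card_image_le (f := fun c => .inl (c :: x)))
  rintro (y | q) hu
  · obtain ⟨-, c, rfl⟩ : x.length ≤ n ∧ ∃ c, y = c :: x := hD.2 hu
    exact mem_image.2 ⟨c, mem_filter.2 ⟨mem_univ _, hu⟩, rfl⟩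
  · have : x.length = n + 1 := hD.2 hu
    omega

/-- The `k ^ m` leaves below `x` are told apart by the child of `x` on their path. -/
theorem exists_leaves (hD : D.IsSubdigraph (forcer d n)) (hk : D.MinOutDegAtLeast k)
    (m : ℕ) (x : List (Fin d)) (hx : .inl x ∈ D.verts) (hlen : x.length + m = n + 1) :
    ∃ S : Finset (List (Fin d)),
      (∀ y ∈ S, .inl y ∈ D.verts ∧ y.length = n + 1 ∧ x <:+ y) ∧ k ^ m ≤ #S := by
  classical
  induction m generalizing x with
  | zero =>
    exact ⟨{x}, by simpa using ⟨hx, hlen⟩, by simp⟩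
  | succ m ih =>
    set C : Finset (Fin d) := {c | D.Adj (.inl x) (.inl (c :: x))}
    have hchild : ∀ c ∈ C, ∃ S : Finset (List (Fin d)),
        (∀ y ∈ S, .inl y ∈ D.verts ∧ y.length = n + 1 ∧ c :: x <:+ y) ∧ k ^ m ≤ #S :=
      fun c hc => ih (c :: x) (D.mem_verts_right (mem_filter.1 hc).2) (by simp; omega)
    choose! S hS hScard using hchild
    have hdisj : (C : Set (Fin d)).PairwiseDisjoint S := by
      intro c hc c' hc' hne
      refine disjoint_left.2 fun y hy hy' => hne ?_
      obtain ⟨-, hylen, hcy⟩ := hS c hc y hy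
      obtain ⟨-, -, hcy'⟩ := hS c' hc' y hy'
      have := (List.suffix_of_suffix_length_le hcy hcy' (by simp)).eq_of_length (by simp)
      exact List.head_eq_of_cons_eq this
    refine ⟨C.biUnion S, fun y hy => ?_, ?_⟩
    · obtain ⟨c, hc, hy⟩ := mem_biUnion.1 hy
      obtain ⟨hyv, hylen, hcy⟩ := hS c hc y hy
      exact ⟨hyv, hylen, (List.suffix_cons c x).trans hcy⟩
    · rw [card_biUnion hdisj, pow_succ']
      calc k * k ^ m ≤ #C * k ^ m :=
            Nat.mul_le_mul_right _ (le_card_children hD hk hx (by omega))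
        _ ≤ ∑ c ∈ C, #(S c) := by
            simpa using card_nsmul_le_sum C (fun c => #(S c)) _ hScard

theorem exists_mem_verts_length_eq_one (hD : D.IsSubdigraph (forcer d n))
    (hk : D.MinOutDegAtLeast k) (hk1 : 1 ≤ k) (hne : D.verts.Nonempty) :
    ∃ x : List (Fin d), .inl x ∈ D.verts ∧ x.length = 1 := by
  have hpool : ∃ q, .inr q ∈ D.verts := by
    obtain ⟨x | q, hv⟩ := hne
    · have hlen : x.length ≤ n + 1 := hD.1 hv
      obtain ⟨S, hS, hScard⟩ := exists_leaves hD hk (n + 1 - x.length) x hv (by omega)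
      obtain ⟨y, hy⟩ := card_pos.1 (lt_of_lt_of_le (Nat.pow_pos hk1) hScard)
      obtain ⟨hyv, hylen, -⟩ := hS y hy
      obtain ⟨z | q, hz⟩ := hk.exists_adj hk1 hyv
      · have : y.length ≤ n := (hD.2 hz).1
        omega
      · exact ⟨q, D.mem_verts_right hz⟩
    · exact ⟨q, hv⟩
  obtain ⟨q, hq⟩ := hpool
  obtain ⟨x | p, hx⟩ := hk.exists_adj hk1 hq
  · exact ⟨x, D.mem_verts_right hx, hD.2 hx⟩
  · exact (hD.2 hx).elim

theorem atLeast_outNbrs_inter_pool (hD : D.IsSubdigraph (forcer d n))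
    (hk : D.MinOutDegAtLeast k) {y : List (Fin d)} (hy : .inl y ∈ D.verts)
    (hylen : y.length = n + 1) :
    AtLeast (D.outNbrs (.inl y) ∩ ↑(univ.map (.inr : Fin d ↪ List (Fin d) ⊕ Fin d))) k := by
  rw [Set.inter_eq_left.2]
  · exact hk _ hy
  rintro (z | q) hz
  · have : y.length ≤ n := (hD.2 hz).1
    omega
  · simp

theorem hasCopy_oneDirKbip_of_isSubdigraph {a b : ℕ} (ha : 1 ≤ a) (hb : 1 ≤ b)
    (hcount : d.choose b * (a - 1) < (a + b) ^ n) (hD : D.IsSubdigraph (forcer d n))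
    (hne : D.verts.Nonempty) (hk : D.MinOutDegAtLeast (a + b)) :
    D.HasCopy (oneDirKbip a b) := by
  obtain ⟨x, hx, hxlen⟩ := exists_mem_verts_length_eq_one hD hk (by omega) hne
  obtain ⟨S, hS, hScard⟩ := exists_leaves hD hk n x hx (by omega)
  refine hasCopy_oneDirKbip_of_card_lt ha hb (S.map .inl) (univ.map .inr) ?_ ?_
  · intro v hv
    obtain ⟨y, hy, rfl⟩ := mem_map.1 hv
    obtain ⟨hyv, hylen, -⟩ := hS y hy
    exact (atLeast_outNbrs_inter_pool hD hk hyv hylen).mono (by omega)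
  · simpa using hcount.trans_le hScard

end forcer

theorem choose_mul_sub_one_lt_pow (d a b : ℕ) (hab : 2 ≤ a + b) :
    d.choose b * (a - 1) < (a + b) ^ (d + a) :=
  calc d.choose b * (a - 1) ≤ 2 ^ d * (a - 1) := Nat.mul_le_mul_right _ (Nat.choose_le_two_pow d b)
    _ < 2 ^ d * 2 ^ a := Nat.mul_lt_mul_of_pos_left ((Nat.sub_le a 1).trans_lt a.lt_two_pow_self)
        (Nat.two_pow_pos d)
    _ = 2 ^ (d + a) := (pow_add 2 d a).symm
    _ ≤ (a + b) ^ (d + a) := Nat.pow_le_pow_left hab _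

/-- No one-directed complete bipartite graph is avoidable. -/
theorem oneDirected_complete_bipartite_not_avoidable :
    ∀ a b : ℕ, 1 ≤ a → 1 ≤ b → ¬ Avoidable (oneDirKbip a b) := by
  rintro a b ha hb ⟨dF, hdF⟩
  set d := dF (a + b)
  obtain ⟨D, hD, hne, hk, hfree⟩ := hdF _ (forcer d (d + a)) (a + b)
    ⟨_, forcer.inl_nil_mem_verts⟩ (forcer.minOutDegAtLeast d (d + a))
  have hcount := choose_mul_sub_one_lt_pow d a b (by omega)
  exact hfree (forcer.hasCopy_oneDirKbip_of_isSubdigraph ha hb hcount hD hne hk)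
end

section
/- For every even integer ℓ ≥ 4, the anti-directed orientation of the cycle C_ℓ (the orientation in which consecutive edges alternate direction, so every vertex is a source or a sink) is not avoidable. -/
open Digraph'

/-- The anti-directed orientation of the cycle `C_ℓ` (for even `ℓ`): the arcs
alternate direction along the cycle, every even vertex being a source. -/
def antiDirCycle (ℓ : ℕ) : Digraph' (Fin ℓ) where
  verts := Set.univ
  Adj u v := u ≠ v ∧ Even u.val ∧
    (v.val = (u.val + 1) % ℓ ∨ u.val = (v.val + 1) % ℓ)
  ne_of_adj := fun _ _ h => h.1
  mem_verts_left := fun _ _ _ => Set.mem_univ _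
  mem_verts_right := fun _ _ _ => Set.mem_univ _

/-!
For the anti-directed cycle of length `2m` and a candidate `d_F`, let `d = d_F(m)` and take the
`d`-ary tree of height `H` whose leaves send arcs back to all `d` vertices of depth one; its
minimum out-degree is `d`. A nonempty subdigraph `D'` of minimum out-degree `m` contains a vertex
of depth one (follow arcs up to a leaf and back), hence at least `m ^ (H - 1)` leaves above it.
Each of these leaves keeps at least `m` out-neighbours among the `d` vertices of depth one, so
once `m ^ (H - 1) > 2 ^ d * (m - 1)` (e.g. `H = d + m + 1`), pigeonhole gives `m` leaves with a
common set of `m` out-neighbours: a complete bipartite `K_{m,m}` oriented one way, which contains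
the anti-directed cycle of length `2m`.
-/

theorem two_pow_mul_pred_lt_pow {m : ℕ} (hm : 2 ≤ m) (d : ℕ) :
    2 ^ d * (m - 1) < m ^ (d + m) :=
  calc 2 ^ d * (m - 1) < 2 ^ d * 2 ^ m := by
        gcongr
        exact (Nat.sub_le m 1).trans_lt m.lt_two_pow_self
    _ = 2 ^ (d + m) := (pow_add 2 d m).symm
    _ ≤ m ^ (d + m) := Nat.pow_le_pow_left hm _

namespace Digraph'

variable {α : Type}

theorem antiDirCycle_adj_odd {ℓ : ℕ} (hℓ : Even ℓ) {u v : Fin ℓ}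
    (h : (antiDirCycle ℓ).Adj u v) : Odd v.val := by
  obtain ⟨b, hb⟩ := hℓ
  have hu := u.isLt
  have hv := v.isLt
  obtain ⟨-, ⟨a, ha⟩, hvu | huv⟩ := h
  · rw [Nat.mod_eq_of_lt (by omega)] at hvu
    exact ⟨a, by omega⟩
  · rcases (Nat.succ_le_of_lt hv).lt_or_eq with hlt | heq
    · rw [Nat.mod_eq_of_lt hlt] at huv
      exact ⟨a - 1, by omega⟩
    · exact ⟨b - 1, by omega⟩

theorem hasCopy_antiDirCycle_of_forall_adj {D : Digraph' α} {m : ℕ} {U T : Finset α}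
    (hU : m ≤ U.card) (hT : m ≤ T.card) (hUT : ∀ u ∈ U, ∀ t ∈ T, D.Adj u t) :
    D.HasCopy (antiDirCycle (m + m)) := by
  obtain ⟨src⟩ : Nonempty (Fin m ↪ U) :=
    Function.Embedding.nonempty_of_card_le (by simpa using hU)
  obtain ⟨tgt⟩ : Nonempty (Fin m ↪ T) :=
    Function.Embedding.nonempty_of_card_le (by simpa using hT)
  have hadj : ∀ i j, D.Adj (src i) (tgt j) := fun i j => hUT _ (src i).2 _ (tgt j).2
  have half_lt : ∀ k : Fin (m + m), k.val / 2 < m := fun k => by omega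
  let f : Fin (m + m) → α := fun k =>
    if Even k.val then src ⟨k / 2, half_lt k⟩ else tgt ⟨k / 2, half_lt k⟩
  refine ⟨f, fun k l hkl => ?_, fun k => ?_, fun k l hkl => ?_⟩
  · by_cases hk : Even k.val <;> by_cases hl : Even l.val <;>
      simp only [f, hk, hl, if_true, if_false] at hkl
    · have := congrArg Fin.val (src.injective (Subtype.ext hkl))
      rw [Nat.even_iff] at hk hl
      exact Fin.ext (by simp only at this; omega)
    · exact absurd hkl (D.ne_of_adj (hadj _ _))
    · exact absurd hkl.symm (D.ne_of_adj (hadj _ _))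
    · have := congrArg Fin.val (tgt.injective (Subtype.ext hkl))
      rw [Nat.not_even_iff] at hk hl
      exact Fin.ext (by simp only at this; omega)
  · by_cases hk : Even k.val <;> simp only [f, hk, if_true, if_false]
    · exact D.mem_verts_left (hadj _ ⟨k / 2, half_lt k⟩)
    · exact D.mem_verts_right (hadj ⟨k / 2, half_lt k⟩ _)
  · have hl := Nat.not_even_iff_odd.2 (antiDirCycle_adj_odd ⟨m, rfl⟩ hkl)
    simp only [f, hkl.2.1, hl, if_true, if_false]
    exact hadj _ _

theorem hasCopy_antiDirCycle_of_outNbrs_subset {D : Digraph' α} {m : ℕ}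
    (hdeg : D.MinOutDegAtLeast m) {L R : Finset α} (hL : ↑L ⊆ D.verts)
    (hLR : ∀ w ∈ L, D.outNbrs w ⊆ R) (hcard : 2 ^ R.card * (m - 1) < L.card) :
    D.HasCopy (antiDirCycle (m + m)) := by
  classical
  have hnbrs : ∀ w ∈ L, ∃ T ∈ R.powerset, m ≤ T.card ∧ ∀ t ∈ T, D.Adj w t := by
    intro w hw
    obtain ⟨t, ht, hmt⟩ := hdeg w (hL hw)
    exact ⟨t, Finset.mem_powerset.2 fun x hx => hLR w hw (ht hx), hmt, fun x hx => ht hx⟩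
  choose! nbrs hnbrs_mem hnbrs_card hnbrs_adj using hnbrs
  obtain ⟨T, -, hfiber⟩ := Finset.exists_lt_card_fiber_of_mul_lt_card_of_maps_to hnbrs_mem
    (by rwa [Finset.card_powerset])
  obtain ⟨w, hw⟩ := Finset.card_pos.1 (Nat.zero_lt_of_lt hfiber)
  rw [Finset.mem_filter] at hw
  refine hasCopy_antiDirCycle_of_forall_adj (U := {x ∈ L | nbrs x = T}) (by omega)
    (hw.2 ▸ hnbrs_card w hw.1) ?_
  intro u hu t ht
  rw [Finset.mem_filter] at hu
  exact hnbrs_adj u hu.1 t (hu.2 ▸ ht)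

/-- The vertex `v` is the path from it up to the root `[]`, so the children of `v` are the
lists `a :: v` and the vertices of depth one are the singletons `[s]`. The condition `1 < H`
keeps a leaf from pointing to itself. -/
def backArcTree (d H : ℕ) : Digraph' (List (Fin d)) where
  verts := {v | v.length ≤ H}
  Adj u v := (u.length < H ∧ ∃ a, v = a :: u) ∨ (1 < H ∧ u.length = H ∧ ∃ s, v = [s])
  ne_of_adj := by
    rintro u v (⟨-, a, rfl⟩ | ⟨hH, hu, s, rfl⟩) huv
    · simpa using congrArg List.length huv
    · simp only [huv, List.length_singleton] at hu
      omega
  mem_verts_left := by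
    rintro u v (⟨hu, -⟩ | ⟨-, hu, -⟩)
    · exact hu.le
    · exact hu.le
  mem_verts_right := by
    rintro u v (⟨hu, a, rfl⟩ | ⟨hH, -, s, rfl⟩)
    · exact hu
    · exact hH.le

namespace backArcTree

theorem minOutDegAtLeast {d H : ℕ} (hH : 1 < H) : (backArcTree d H).MinOutDegAtLeast d := by
  intro v (hv : v.length ≤ H)
  rcases hv.lt_or_eq with hlt | heq
  · refine ⟨Finset.univ.image (· :: v), ?_, ?_⟩
    · rw [Finset.coe_image, Finset.coe_univ, Set.image_univ]
      exact Set.range_subset_iff.2 fun a => Or.inl ⟨hlt, a, rfl⟩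
    · rw [Finset.card_image_of_injective _ fun a b hab => List.head_eq_of_cons_eq hab]
      simp
  · refine ⟨Finset.univ.image ([·]), ?_, ?_⟩
    · rw [Finset.coe_image, Finset.coe_univ, Set.image_univ]
      exact Set.range_subset_iff.2 fun s => Or.inr ⟨hH, heq, s, rfl⟩
    · rw [Finset.card_image_of_injective _ fun a b hab => List.head_eq_of_cons_eq hab]
      simp

variable {d H m : ℕ} {D : Digraph' (List (Fin d))}

theorem exists_leaves_above (hsub : D.IsSubdigraph (backArcTree d H))
    (hdeg : D.MinOutDegAtLeast m) (n : ℕ) :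
    ∀ v ∈ D.verts, v.length + n = H → ∃ S : Finset (List (Fin d)),
      (∀ w ∈ S, w ∈ D.verts ∧ w.length = H ∧ v <:+ w) ∧ m ^ n ≤ S.card := by
  induction n with
  | zero =>
    intro v hv hvH
    exact ⟨{v}, by simpa using ⟨hv, hvH⟩, by simp⟩
  | succ n ih =>
    intro v hv hvH
    obtain ⟨t, ht, hmt⟩ := hdeg v hv
    have hchild : ∀ u ∈ t, u ∈ D.verts ∧ ∃ a, u = a :: v := by
      intro u hu
      have hvu : D.Adj v u := ht hu
      refine ⟨D.mem_verts_right hvu, ?_⟩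
      rcases hsub.2 hvu with ⟨-, a, rfl⟩ | ⟨-, hv', -⟩
      · exact ⟨a, rfl⟩
      · omega
    have hleaves : ∀ u ∈ t, ∃ S : Finset (List (Fin d)),
        (∀ w ∈ S, w ∈ D.verts ∧ w.length = H ∧ u <:+ w) ∧ m ^ n ≤ S.card := by
      intro u hu
      obtain ⟨hu, a, rfl⟩ := hchild u hu
      exact ih _ hu (by simp only [List.length_cons]; omega)
    choose! S hS hScard using hleaves
    have hdisj : (t : Set (List (Fin d))).PairwiseDisjoint S := by
      intro u₁ hu₁ u₂ hu₂ hne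
      refine Finset.disjoint_left.2 fun w hw₁ hw₂ => hne ?_
      -- both are suffixes of `w` of length `v.length + 1`
      obtain ⟨-, a₁, rfl⟩ := hchild u₁ hu₁
      obtain ⟨-, a₂, rfl⟩ := hchild u₂ hu₂
      exact (List.suffix_of_suffix_length_le (hS _ hu₁ w hw₁).2.2 (hS _ hu₂ w hw₂).2.2
        (by simp)).eq_of_length (by simp)
    refine ⟨t.biUnion S, ?_, ?_⟩
    · simp only [Finset.mem_biUnion]
      rintro w ⟨u, hu, hwS⟩
      obtain ⟨hw, hwH, huw⟩ := hS u hu w hwS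
      obtain ⟨-, a, rfl⟩ := hchild u hu
      exact ⟨hw, hwH, (List.suffix_cons a v).trans huw⟩
    · calc m ^ (n + 1) = m * m ^ n := pow_succ' m n
        _ ≤ t.card • m ^ n := Nat.mul_le_mul_right _ hmt
        _ ≤ ∑ u ∈ t, (S u).card := Finset.card_nsmul_le_sum _ _ _ hScard
        _ = (t.biUnion S).card := (Finset.card_biUnion hdisj).symm

theorem exists_many_leaves (hsub : D.IsSubdigraph (backArcTree d H))
    (hdeg : D.MinOutDegAtLeast m) (hm : 1 ≤ m) (hne : D.verts.Nonempty) :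
    ∃ S : Finset (List (Fin d)),
      (∀ w ∈ S, w ∈ D.verts ∧ w.length = H) ∧ m ^ (H - 1) ≤ S.card := by
  obtain ⟨v, hv⟩ := hne
  have hvH : v.length ≤ H := hsub.1 hv
  obtain ⟨S₀, hS₀, hS₀card⟩ := exists_leaves_above hsub hdeg _ v hv (Nat.add_sub_of_le hvH)
  obtain ⟨w, hw⟩ := Finset.card_pos.1 ((pow_pos hm _).trans_le hS₀card)
  obtain ⟨hw, hwH, -⟩ := hS₀ w hw
  obtain ⟨t, ht, hmt⟩ := hdeg w hw
  obtain ⟨x, hx⟩ := Finset.card_pos.1 (hm.trans hmt)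
  have hwx : D.Adj w x := ht hx
  rcases hsub.2 hwx with ⟨hlt, -⟩ | ⟨hH, -, s, rfl⟩
  · omega
  obtain ⟨S, hS, hScard⟩ :=
    exists_leaves_above hsub hdeg (H - 1) [s] (D.mem_verts_right hwx)
      (by simp only [List.length_singleton]; omega)
  exact ⟨S, fun w hw => ⟨(hS w hw).1, (hS w hw).2.1⟩, hScard⟩

theorem hasCopy_antiDirCycle_of_isSubdigraph
    (hsub : D.IsSubdigraph (backArcTree d H)) (hdeg : D.MinOutDegAtLeast m) (hm : 1 ≤ m)
    (hcount : 2 ^ d * (m - 1) < m ^ (H - 1)) (hne : D.verts.Nonempty) :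
    D.HasCopy (antiDirCycle (m + m)) := by
  obtain ⟨S, hS, hScard⟩ := exists_many_leaves hsub hdeg hm hne
  refine hasCopy_antiDirCycle_of_outNbrs_subset hdeg (R := Finset.univ.image ([·]))
    (fun w hw => (hS w hw).1) ?_ ?_
  · intro w hw x (hwx : D.Adj w x)
    rcases hsub.2 hwx with ⟨hlt, -⟩ | ⟨-, -, s, rfl⟩
    · exact absurd (hS w hw).2 hlt.ne
    · simp
  · calc 2 ^ (Finset.univ.image ([·] : Fin d → List (Fin d))).card * (m - 1)
        ≤ 2 ^ d * (m - 1) := by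
          gcongr
          · norm_num
          · exact Finset.card_image_le.trans (by simp)
      _ < m ^ (H - 1) := hcount
      _ ≤ S.card := hScard

end backArcTree

end Digraph'

/-- For every even `ℓ ≥ 4`, the anti-directed orientation of `C_ℓ` is not
avoidable. -/
theorem antiDirected_cycle_not_avoidable :
    ∀ ℓ : ℕ, 4 ≤ ℓ → Even ℓ → ¬ Avoidable (antiDirCycle ℓ) := by
  rintro ℓ hℓ ⟨m, rfl⟩ ⟨dF, hdF⟩
  have hm : 2 ≤ m := by omega
  obtain ⟨D, hsub, hne, hdeg, hfree⟩ := hdF _ (backArcTree (dF m) (dF m + m + 1)) m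
    ⟨[], by simp [backArcTree]⟩ (backArcTree.minOutDegAtLeast (by omega))
  exact hfree (backArcTree.hasCopy_antiDirCycle_of_isSubdigraph hsub hdeg (by omega)
    (two_pow_mul_pred_lt_pow hm (dF m)) hne)
end

section
/- For every digraph D there exists a 3-coloring c : V(D) → {1,2,3} such that every vertex v with at least one out-neighbor has at least a third of its out-neighbors colored differently from v, i.e., |{u ∈ N⁺(v) : c(u) ≠ c(v)}| ≥ d⁺(v)/3. -/
open Digraph'

/-!
Give every vertex a weight `ω v > 0` such that the weight flowing into `v` along its in-arcs,
`∑_{u → v} ω u`, is less than `(d⁺(v) + 1) · ω v`; such weights exist because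
`diag(d⁺ + 1) - Aᵀ` is a column diagonally dominant M-matrix. Let the arc `uw` carry weight
`ω u`, and take a colouring `c` with `k` colours minimising the total weight of monochromatic
arcs. Recolouring `v` with `b` costs `ω v · #{out-neighbours of colour b} + ∑_{u → v, c u = b} ω u`,
so at a minimum the current colour is no costlier than the average over all `k` colours:
`k · ω v · #{out-neighbours of colour c v} ≤ ω v · d⁺(v) + ∑_{u → v} ω u < ω v · (2 d⁺(v) + 1)`.
Hence at most `2 d⁺(v) / k` out-neighbours share the colour of `v`. Infinite digraphs of finite
out-degree follow by compactness of `κ^α`.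
-/

open Finset Function

namespace Digraph

variable {V : Type*} [Fintype V] (G : Digraph V) [DecidableRel G.Adj]

theorem sum_sum_adj_eq_sum_card_mul (z : V → ℝ) :
    ∑ v, ∑ u with G.Adj u v, z u = ∑ u, #{v | G.Adj u v} * z u := by
  rw [sum_comm' (t' := univ) (s' := fun u => {v | G.Adj u v}) (by simp)]
  simp [sum_const, nsmul_eq_mul]

theorem eq_zero_of_forall_mul_le_sum_adj {z : V → ℝ} (hz : 0 ≤ z)
    (h : ∀ v, (#{u | G.Adj v u} + 1) * z v ≤ ∑ u with G.Adj u v, z u) : z = 0 := by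
  have htotal : ∑ v, z v ≤ 0 := by
    have := sum_le_sum fun v (_ : v ∈ univ) => h v
    simp only [sum_sum_adj_eq_sum_card_mul, add_mul, one_mul, sum_add_distrib] at this
    linarith
  funext v
  exact (sum_eq_zero_iff_of_nonneg fun v _ => hz v).mp
    (htotal.antisymm (sum_nonneg fun v _ => hz v)) v (mem_univ v)

theorem exists_card_add_one_mul_eq_one_add_sum_adj [DecidableEq V] :
    ∃ ω : V → ℝ, ∀ v, (#{u | G.Adj v u} + 1) * ω v = 1 + ∑ u with G.Adj u v, ω u := by
  set M : Matrix V V ℝ := Matrix.diagonal (fun v => (#{u | G.Adj v u} + 1 : ℝ)) -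
    Matrix.of fun v u => if G.Adj u v then 1 else 0
  have hM : ∀ x v, M.mulVec x v = (#{u | G.Adj v u} + 1) * x v - ∑ u with G.Adj u v, x u := by
    intro x v
    simp only [M, Matrix.sub_mulVec, Pi.sub_apply, Matrix.mulVec_diagonal]
    simp [Matrix.mulVec, dotProduct, sum_filter]
  have hinj : Injective M.mulVec := by
    intro x y hxy
    have hker : ∀ v, (#{u | G.Adj v u} + 1) * (x - y) v = ∑ u with G.Adj u v, (x - y) u := by
      intro v
      have := congrFun hxy v
      rw [hM, hM] at this
      simp only [Pi.sub_apply, sum_sub_distrib]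
      linarith
    have habs := G.eq_zero_of_forall_mul_le_sum_adj (z := fun v => |(x - y) v|)
      (fun v => abs_nonneg _) fun v => by
        calc (#{u | G.Adj v u} + 1) * |(x - y) v|
            = |∑ u with G.Adj u v, (x - y) u| := by
              rw [← hker, abs_mul, abs_of_pos (by positivity : (0 : ℝ) < #{u | G.Adj v u} + 1)]
          _ ≤ ∑ u with G.Adj u v, |(x - y) u| := abs_sum_le_sum_abs _ _
    funext v
    simpa [sub_eq_zero] using congrFun habs v
  obtain ⟨ω, hω⟩ := Matrix.mulVec_surjective_iff_isUnit.mpr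
    (Matrix.mulVec_injective_iff_isUnit.mp hinj) 1
  refine ⟨ω, fun v => ?_⟩
  have := hM ω v
  rw [hω, Pi.one_apply] at this
  linarith

theorem nonneg_of_forall_card_add_one_mul_eq_one_add_sum_adj {ω : V → ℝ}
    (hω : ∀ v, (#{u | G.Adj v u} + 1) * ω v = 1 + ∑ u with G.Adj u v, ω u) : 0 ≤ ω := by
  have hneg : (fun v => (ω v)⁻) = 0 := by
    refine G.eq_zero_of_forall_mul_le_sum_adj (fun v => negPart_nonneg _) fun v => ?_
    rcases le_or_gt 0 (ω v) with hv | hv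
    · rw [negPart_eq_zero.mpr hv, mul_zero]
      exact sum_nonneg fun u _ => negPart_nonneg _
    · have hle : ∑ u with G.Adj u v, -ω u ≤ ∑ u with G.Adj u v, (ω u)⁻ :=
        sum_le_sum fun u _ => neg_le_negPart _
      rw [sum_neg_distrib] at hle
      rw [negPart_eq_neg.mpr hv.le]
      linarith [hω v]
  intro v
  simpa using congrFun hneg v

theorem exists_pos_sum_adj_lt [DecidableEq V] :
    ∃ ω : V → ℝ, (∀ v, 0 < ω v) ∧
      ∀ v, ∑ u with G.Adj u v, ω u < (#{u | G.Adj v u} + 1) * ω v := by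
  obtain ⟨ω, hω⟩ := G.exists_card_add_one_mul_eq_one_add_sum_adj
  have hnonneg := G.nonneg_of_forall_card_add_one_mul_eq_one_add_sum_adj hω
  refine ⟨ω, fun v => ?_, fun v => by linarith [hω v]⟩
  have hin : 0 ≤ ∑ u with G.Adj u v, ω u := sum_nonneg fun u _ => hnonneg u
  nlinarith [hω v]

section LocalSearch

variable {κ : Type*} [DecidableEq V] [DecidableEq κ] (ω : V → ℝ)

def monoArcWeight (c : V → κ) : ℝ :=
  ∑ u, ∑ w, if G.Adj u w ∧ c w = c u then ω u else 0

variable {G}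

theorem monoArcWeight_eq (hG : ∀ v, ¬ G.Adj v v) (c : V → κ) (v : V) :
    G.monoArcWeight ω c =
      ∑ u ∈ {v}ᶜ, ∑ w ∈ {v}ᶜ, (if G.Adj u w ∧ c w = c u then ω u else 0) +
        (ω v * #{w | G.Adj v w ∧ c w = c v} + ∑ u with G.Adj u v ∧ c u = c v, ω u) := by
  have hout : ∑ w, (if G.Adj v w ∧ c w = c v then ω v else 0) =
      ω v * #{w | G.Adj v w ∧ c w = c v} := by
    rw [← sum_filter, sum_const, nsmul_eq_mul, mul_comm]
  have hin : ∑ u ∈ {v}ᶜ, (if G.Adj u v ∧ c v = c u then ω u else 0) =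
      ∑ u with G.Adj u v ∧ c u = c v, ω u := by
    rw [sum_filter, Fintype.sum_eq_add_sum_compl v, if_neg (fun h => hG v h.1), zero_add]
    simp only [eq_comm]
  have hsplit : ∀ u, ∑ w, (if G.Adj u w ∧ c w = c u then ω u else 0) =
      (if G.Adj u v ∧ c v = c u then ω u else 0) +
        ∑ w ∈ {v}ᶜ, (if G.Adj u w ∧ c w = c u then ω u else 0) :=
    fun u => Fintype.sum_eq_add_sum_compl v _
  rw [monoArcWeight, Fintype.sum_eq_add_sum_compl v, hout, ← hin]
  simp only [hsplit, sum_add_distrib]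
  ring

theorem monoArcWeight_update (hG : ∀ v, ¬ G.Adj v v) (c : V → κ) (v : V) (b : κ) :
    G.monoArcWeight ω (update c v b) =
      ∑ u ∈ {v}ᶜ, ∑ w ∈ {v}ᶜ, (if G.Adj u w ∧ c w = c u then ω u else 0) +
        (ω v * #{w | G.Adj v w ∧ c w = b} + ∑ u with G.Adj u v ∧ c u = b, ω u) := by
  have hne : ∀ {u w}, G.Adj u w → u ≠ w := fun h huw => hG _ (huw ▸ h)
  have hrest : ∑ u ∈ {v}ᶜ, ∑ w ∈ {v}ᶜ,
      (if G.Adj u w ∧ update c v b w = update c v b u then ω u else 0) =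
      ∑ u ∈ {v}ᶜ, ∑ w ∈ {v}ᶜ, (if G.Adj u w ∧ c w = c u then ω u else 0) :=
    sum_congr rfl fun u hu => sum_congr rfl fun w hw => by
      rw [update_of_ne (mem_compl.mp hu ∘ mem_singleton.mpr),
        update_of_ne (mem_compl.mp hw ∘ mem_singleton.mpr)]
  have hout : univ.filter (fun w => G.Adj v w ∧ update c v b w = b) =
      univ.filter (fun w => G.Adj v w ∧ c w = b) :=
    filter_congr fun w _ => and_congr_right fun h => by rw [update_of_ne (hne h).symm]
  have hin : univ.filter (fun u => G.Adj u v ∧ update c v b u = b) =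
      univ.filter (fun u => G.Adj u v ∧ c u = b) :=
    filter_congr fun u _ => and_congr_right fun h => by rw [update_of_ne (hne h)]
  rw [monoArcWeight_eq ω hG _ v, update_self, hrest, hout, hin]

theorem le_of_forall_monoArcWeight_le (hG : ∀ v, ¬ G.Adj v v) {c : V → κ}
    (hc : ∀ c' : V → κ, G.monoArcWeight ω c ≤ G.monoArcWeight ω c') (v : V) (b : κ) :
    ω v * #{w | G.Adj v w ∧ c w = c v} + ∑ u with G.Adj u v ∧ c u = c v, ω u ≤
      ω v * #{w | G.Adj v w ∧ c w = b} + ∑ u with G.Adj u v ∧ c u = b, ω u := by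
  have := hc (update c v b)
  rw [monoArcWeight_eq ω hG c v, monoArcWeight_update ω hG c v b] at this
  linarith

theorem card_mul_card_monochromatic_le [Fintype κ] (hG : ∀ v, ¬ G.Adj v v) (hω : ∀ v, 0 < ω v)
    (hflow : ∀ v, ∑ u with G.Adj u v, ω u < (#{u | G.Adj v u} + 1) * ω v) {c : V → κ}
    (hc : ∀ c' : V → κ, G.monoArcWeight ω c ≤ G.monoArcWeight ω c') (v : V) :
    Fintype.card κ * #{w | G.Adj v w ∧ c w = c v} ≤ 2 * #{w | G.Adj v w} := by
  have hsum := sum_le_sum fun b (_ : b ∈ univ) => le_of_forall_monoArcWeight_le ω hG hc v b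
  have hout : ∑ b : κ, (#{w | G.Adj v w ∧ c w = b} : ℝ) = #{w | G.Adj v w} := by
    rw [card_eq_sum_card_fiberwise (f := c) (t := univ) fun _ _ => mem_univ _]
    simp [filter_filter]
  have hin : ∑ b : κ, ∑ u with G.Adj u v ∧ c u = b, ω u = ∑ u with G.Adj u v, ω u := by
    rw [← sum_fiberwise _ c]
    simp [filter_filter]
  have hin₀ : 0 ≤ ∑ u with G.Adj u v ∧ c u = c v, ω u := sum_nonneg fun u _ => (hω u).le
  rw [sum_const, card_univ, nsmul_eq_mul, sum_add_distrib, ← mul_sum, hout, hin] at hsum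
  have hlt : (Fintype.card κ * #{w | G.Adj v w ∧ c w = c v} : ℝ) * ω v <
      (2 * #{w | G.Adj v w} + 1) * ω v := by
    nlinarith [hflow v]
  exact Nat.lt_succ_iff.mp (by exact_mod_cast lt_of_mul_lt_mul_right hlt (hω v).le)

theorem exists_coloring_card_monochromatic_le [Fintype κ] [Nonempty κ]
    (hG : ∀ v, ¬ G.Adj v v) :
    ∃ c : V → κ, ∀ v, Fintype.card κ * #{w | G.Adj v w ∧ c w = c v} ≤ 2 * #{w | G.Adj v w} := by
  obtain ⟨ω, hω, hflow⟩ := G.exists_pos_sum_adj_lt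
  obtain ⟨c, hc⟩ := Finite.exists_min (G.monoArcWeight (κ := κ) ω)
  exact ⟨c, card_mul_card_monochromatic_le ω hG hω hflow hc⟩

end LocalSearch

end Digraph

theorem exists_forall_of_forall_finset_exists {α ι κ : Type*} [Finite κ]
    (P : ι → (α → κ) → Prop)
    (hP : ∀ i, ∃ s : Finset α, ∀ c c' : α → κ, (∀ a ∈ s, c a = c' a) → P i c → P i c')
    (h : ∀ t : Finset ι, ∃ c, ∀ i ∈ t, P i c) : ∃ c, ∀ i, P i c := by
  let : TopologicalSpace κ := ⊥
  have : DiscreteTopology κ := ⟨rfl⟩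
  have hclosed : ∀ i, IsClosed {c | P i c} := by
    intro i
    obtain ⟨s, hs⟩ := hP i
    rw [← isOpen_compl_iff, isOpen_iff_forall_mem_open]
    refine fun c hc => ⟨(s : Set α).pi fun a => {c a}, fun c' hc' hPc' => hc (hs c' c ?_ hPc'),
      isOpen_set_pi s.finite_toSet fun a _ => isOpen_discrete _, by simp⟩
    simpa using hc'
  obtain ⟨c, hc⟩ := CompactSpace.iInter_nonempty hclosed fun t => by
    simpa [Set.nonempty_def] using h t
  exact ⟨c, Set.mem_iInter.mp hc⟩

theorem Set.ncard_eq_card_filter_subtype {α : Type*} {s t : Set α} [Fintype t]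
    [DecidablePred (· ∈ s)] (hst : s ⊆ t) : s.ncard = #{u : t | ↑u ∈ s} := by
  rw [← Set.ncard_coe_finset, Finset.coe_filter]
  simp only [Finset.mem_univ, true_and]
  exact (congrArg Set.ncard (Set.inter_eq_left.mpr hst)).symm.trans
    (Set.ncard_subtype (· ∈ t) s).symm

namespace Digraph'

variable {α : Type} {κ : Type*} [Fintype κ]

theorem exists_coloring_card_monochromatic_le_of_finite [Nonempty κ] (D : Digraph' α)
    (hD : D.verts.Finite) :
    ∃ c : α → κ, ∀ v ∈ D.verts,
      Fintype.card κ * {u | u ∈ D.outNbrs v ∧ c u = c v}.ncard ≤ 2 * (D.outNbrs v).ncard := by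
  classical
  have := hD.fintype
  let G : Digraph D.verts := ⟨fun u w => D.Adj u w⟩
  obtain ⟨c, hc⟩ := G.exists_coloring_card_monochromatic_le (κ := κ) fun v h => D.ne_of_adj h rfl
  refine ⟨fun a => if h : a ∈ D.verts then c ⟨a, h⟩ else Classical.arbitrary κ, fun v hv => ?_⟩
  rw [Set.ncard_eq_card_filter_subtype fun u hu => D.mem_verts_right hu.1,
    Set.ncard_eq_card_filter_subtype (s := D.outNbrs v) fun u hu => D.mem_verts_right hu]
  convert hc ⟨v, hv⟩ using 3 <;> ext <;> simp only [mem_filter, mem_univ, true_and] <;>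
    simp [outNbrs, G, hv]

def arcsFrom (D : Digraph' α) (t : Set α) : Digraph' α where
  verts := t ∪ ⋃ v ∈ t, D.outNbrs v
  Adj u w := u ∈ t ∧ D.Adj u w
  ne_of_adj _ _ h := D.ne_of_adj h.2
  mem_verts_left _ _ h := Or.inl h.1
  mem_verts_right _ _ h := Or.inr (Set.mem_biUnion h.1 h.2)

theorem outNbrs_arcsFrom (D : Digraph' α) {t : Set α} {v : α} (hv : v ∈ t) :
    (D.arcsFrom t).outNbrs v = D.outNbrs v := by
  ext u
  simp [arcsFrom, outNbrs, hv]

theorem exists_coloring_card_monochromatic_le [Nonempty κ] (D : Digraph' α)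
    (hfin : ∀ v ∈ D.verts, (D.outNbrs v).Finite) :
    ∃ c : α → κ, ∀ v ∈ D.verts,
      Fintype.card κ * {u | u ∈ D.outNbrs v ∧ c u = c v}.ncard ≤ 2 * (D.outNbrs v).ncard := by
  classical
  refine exists_forall_of_forall_finset_exists _ (fun v => ?_) fun t => ?_
  · by_cases hv : v ∈ D.verts
    · refine ⟨insert v (hfin v hv).toFinset, fun c c' hcc' hc _ => ?_⟩
      have hsame : {u | u ∈ D.outNbrs v ∧ c' u = c' v} = {u | u ∈ D.outNbrs v ∧ c u = c v} := by
        ext u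
        simp only [Set.mem_ofPred_eq, and_congr_right_iff]
        intro hu
        rw [hcc' u (mem_insert_of_mem ((hfin v hv).mem_toFinset.mpr hu)),
          hcc' v (mem_insert_self _ _)]
      rw [hsame]
      exact hc hv
    · exact ⟨∅, fun _ _ _ _ hv' => absurd hv' hv⟩
  · set s : Set α := ↑t ∩ D.verts
    have hs : (D.arcsFrom s).verts.Finite :=
      (t.finite_toSet.inter_of_left _).union
        ((t.finite_toSet.inter_of_left _).biUnion fun v hv => hfin v hv.2)
    obtain ⟨c, hc⟩ := (D.arcsFrom s).exists_coloring_card_monochromatic_le_of_finite (κ := κ) hs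
    refine ⟨c, fun v hvt hv => ?_⟩
    have hvs : v ∈ s := ⟨hvt, hv⟩
    simpa only [D.outNbrs_arcsFrom hvs] using hc v (Or.inl hvs)

end Digraph'

/-- Every digraph admits a 3-colouring of its vertices such that every vertex
with at least one out-neighbour has at least a third of its out-neighbours
coloured differently from itself. -/
theorem majority_three_coloring :
    ∀ (α : Type) (D : Digraph' α), (∀ v ∈ D.verts, (D.outNbrs v).Finite) →
      ∃ c : α → Fin 3, ∀ v ∈ D.verts, (D.outNbrs v).Nonempty →
        (D.outNbrs v).ncard ≤ 3 * {u | u ∈ D.outNbrs v ∧ c u ≠ c v}.ncard := by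
  intro α D hfin
  obtain ⟨c, hc⟩ := D.exists_coloring_card_monochromatic_le (κ := Fin 3) hfin
  refine ⟨c, fun v hv _ => ?_⟩
  have hsplit : {u | u ∈ D.outNbrs v ∧ c u = c v}.ncard +
      {u | u ∈ D.outNbrs v ∧ c u ≠ c v}.ncard = (D.outNbrs v).ncard :=
    Set.ncard_inter_add_ncard_sdiff_eq_ncard _ {u | c u = c v} (hfin v hv)
  have hsame := hc v hv
  rw [Fintype.card_fin] at hsame
  omega
end

section
/- Let D be a 3-partite digraph that is 2-typed. Then D contains no copy of the transitive triangle C_3^{(2)}, no copy of the orientation C_5^{(3)} of the 5-cycle, and no copy of the orientation C_5^{(4)} of the 5-cycle. -/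
open Digraph'

/-- `(A, B, C)` is a tripartition of `D`: it partitions the vertex set and no
arc has both endpoints in the same part. -/
def IsTripartition {α : Type} (D : Digraph' α) (A B C : Set α) : Prop :=
  A ∪ B ∪ C = D.verts ∧ Disjoint A B ∧ Disjoint A C ∧ Disjoint B C ∧
    ∀ ⦃u v : α⦄, D.Adj u v →
      ¬(u ∈ A ∧ v ∈ A) ∧ ¬(u ∈ B ∧ v ∈ B) ∧ ¬(u ∈ C ∧ v ∈ C)

/-- The set of vertices reachable from `S` by a directed walk of length
exactly `n`. -/
def nthOutSet {α : Type} (D : Digraph' α) (S : Set α) : ℕ → Set α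
  | 0 => S
  | n + 1 => {v | ∃ u ∈ nthOutSet D S n, D.Adj u v}

/-- `D` is `s`-typed with witnessing partition `(A, B, C)`: every vertex `v`
has a word `t ∈ {A,B,C}^s` with `N_i⁺(v) ⊆ t i` for all `1 ≤ i ≤ s`. -/
def TypedWith {α : Type} (D : Digraph' α) (A B C : Set α) (s : ℕ) : Prop :=
  ∀ v ∈ D.verts, ∃ t : Fin s → Set α,
    (∀ i : Fin s, t i = A ∨ t i = B ∨ t i = C) ∧
    ∀ i : Fin s, nthOutSet D {v} (i.val + 1) ⊆ t i

/-- The transitive triangle `C₃⁽²⁾`. -/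
def C3trans : Digraph' (Fin 3) where
  verts := Set.univ
  Adj u v := (u = 0 ∧ v = 1) ∨ (u = 1 ∧ v = 2) ∨ (u = 0 ∧ v = 2)
  ne_of_adj := by
    intro u v h
    rcases h with ⟨rfl, rfl⟩ | ⟨rfl, rfl⟩ | ⟨rfl, rfl⟩ <;> decide
  mem_verts_left := fun _ _ _ => Set.mem_univ _
  mem_verts_right := fun _ _ _ => Set.mem_univ _

/-- The orientation `C₅⁽³⁾` of the 5-cycle, with arcs
`(0,1), (1,2), (2,3), (4,3), (0,4)`. -/
def C5three : Digraph' (Fin 5) where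
  verts := Set.univ
  Adj u v := (u = 0 ∧ v = 1) ∨ (u = 1 ∧ v = 2) ∨ (u = 2 ∧ v = 3) ∨
    (u = 4 ∧ v = 3) ∨ (u = 0 ∧ v = 4)
  ne_of_adj := by
    intro u v h
    rcases h with ⟨rfl, rfl⟩ | ⟨rfl, rfl⟩ | ⟨rfl, rfl⟩ | ⟨rfl, rfl⟩ | ⟨rfl, rfl⟩ <;> decide
  mem_verts_left := fun _ _ _ => Set.mem_univ _
  mem_verts_right := fun _ _ _ => Set.mem_univ _

/-- The orientation `C₅⁽⁴⁾` of the 5-cycle, with arcs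
`(0,1), (1,2), (3,2), (3,4), (0,4)`. -/
def C5four : Digraph' (Fin 5) where
  verts := Set.univ
  Adj u v := (u = 0 ∧ v = 1) ∨ (u = 1 ∧ v = 2) ∨ (u = 3 ∧ v = 2) ∨
    (u = 3 ∧ v = 4) ∨ (u = 0 ∧ v = 4)
  ne_of_adj := by
    intro u v h
    rcases h with ⟨rfl, rfl⟩ | ⟨rfl, rfl⟩ | ⟨rfl, rfl⟩ | ⟨rfl, rfl⟩ | ⟨rfl, rfl⟩ <;> decide
  mem_verts_left := fun _ _ _ => Set.mem_univ _
  mem_verts_right := fun _ _ _ => Set.mem_univ _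

/-- A 3-partite 2-typed digraph contains no copy of the transitive triangle
`C₃⁽²⁾`, nor of the orientations `C₅⁽³⁾` and `C₅⁽⁴⁾` of the 5-cycle. -/
theorem two_typed_digraphs_exclude_easy_orientations :
    ∀ (α : Type) (D : Digraph' α) (A B C : Set α),
      IsTripartition D A B C → TypedWith D A B C 2 →
      ¬ D.HasCopy C3trans ∧ ¬ D.HasCopy C5three ∧ ¬ D.HasCopy C5four := by
  intro α D A B C ⟨hpart, hAB, hAC, hBC, hno⟩ htyped
  -- no arc has both endpoints inside one part
  have noSame : ∀ X : Set α, (X = A ∨ X = B ∨ X = C) →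
      ∀ u v, D.Adj u v → u ∈ X → v ∈ X → False := by
    intro X hX u v hadj hu hv
    obtain ⟨h1, h2, h3⟩ := hno hadj
    rcases hX with rfl | rfl | rfl
    · exact h1 ⟨hu, hv⟩
    · exact h2 ⟨hu, hv⟩
    · exact h3 ⟨hu, hv⟩
  -- two parts sharing a point are equal
  have diffDisj : ∀ X Y : Set α, (X = A ∨ X = B ∨ X = C) →
      (Y = A ∨ Y = B ∨ Y = C) → ∀ v, v ∈ X → v ∈ Y → X = Y := by
    intro X Y hX hY v hvX hvY
    rcases hX with rfl | rfl | rfl <;> rcases hY with rfl | rfl | rfl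
    · rfl
    · exact absurd hvY (Set.disjoint_left.mp hAB hvX)
    · exact absurd hvY (Set.disjoint_left.mp hAC hvX)
    · exact absurd hvY (Set.disjoint_left.mp hAB.symm hvX)
    · rfl
    · exact absurd hvY (Set.disjoint_left.mp hBC hvX)
    · exact absurd hvY (Set.disjoint_left.mp hAC.symm hvX)
    · exact absurd hvY (Set.disjoint_left.mp hBC.symm hvX)
    · rfl
  have mem1 : ∀ a b, D.Adj a b → b ∈ nthOutSet D {a} 1 :=
    fun a b h => ⟨a, rfl, h⟩
  have mem2 : ∀ a b c, D.Adj a b → D.Adj b c → c ∈ nthOutSet D {a} 2 :=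
    fun a b c hab hbc => ⟨b, mem1 a b hab, hbc⟩
  refine ⟨?_, ?_, ?_⟩
  · rintro ⟨f, -, hverts, hadj⟩
    have h01 : D.Adj (f 0) (f 1) := hadj (Or.inl ⟨rfl, rfl⟩)
    have h12 : D.Adj (f 1) (f 2) := hadj (Or.inr (Or.inl ⟨rfl, rfl⟩))
    have h02 : D.Adj (f 0) (f 2) := hadj (Or.inr (Or.inr ⟨rfl, rfl⟩))
    obtain ⟨t, ht, hcov⟩ := htyped (f 0) (hverts 0)
    exact noSame (t 0) (ht 0) (f 1) (f 2) h12
      (hcov 0 (mem1 _ _ h01)) (hcov 0 (mem1 _ _ h02))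
  · rintro ⟨f, -, hverts, hadj⟩
    have h01 : D.Adj (f 0) (f 1) := hadj (Or.inl ⟨rfl, rfl⟩)
    have h12 : D.Adj (f 1) (f 2) := hadj (Or.inr (Or.inl ⟨rfl, rfl⟩))
    have h23 : D.Adj (f 2) (f 3) := hadj (Or.inr (Or.inr (Or.inl ⟨rfl, rfl⟩)))
    have h43 : D.Adj (f 4) (f 3) :=
      hadj (Or.inr (Or.inr (Or.inr (Or.inl ⟨rfl, rfl⟩))))
    have h04 : D.Adj (f 0) (f 4) :=
      hadj (Or.inr (Or.inr (Or.inr (Or.inr ⟨rfl, rfl⟩))))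
    obtain ⟨t, ht, hcov⟩ := htyped (f 0) (hverts 0)
    exact noSame (t 1) (ht 1) (f 2) (f 3) h23
      (hcov 1 (mem2 _ _ _ h01 h12)) (hcov 1 (mem2 _ _ _ h04 h43))
  · rintro ⟨f, -, hverts, hadj⟩
    have h01 : D.Adj (f 0) (f 1) := hadj (Or.inl ⟨rfl, rfl⟩)
    have h12 : D.Adj (f 1) (f 2) := hadj (Or.inr (Or.inl ⟨rfl, rfl⟩))
    have h32 : D.Adj (f 3) (f 2) := hadj (Or.inr (Or.inr (Or.inl ⟨rfl, rfl⟩)))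
    have h34 : D.Adj (f 3) (f 4) :=
      hadj (Or.inr (Or.inr (Or.inr (Or.inl ⟨rfl, rfl⟩))))
    have h04 : D.Adj (f 0) (f 4) :=
      hadj (Or.inr (Or.inr (Or.inr (Or.inr ⟨rfl, rfl⟩))))
    obtain ⟨t, ht, hcov⟩ := htyped (f 0) (hverts 0)
    obtain ⟨s, hs, hscov⟩ := htyped (f 3) (hverts 3)
    have heq : t 0 = s 0 := diffDisj (t 0) (s 0) (ht 0) (hs 0) (f 4)
      (hcov 0 (mem1 _ _ h04)) (hscov 0 (mem1 _ _ h34))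
    exact noSame (t 0) (ht 0) (f 1) (f 2) h12
      (hcov 0 (mem1 _ _ h01)) (heq ▸ hscov 0 (mem1 _ _ h32))
end

section
/- Let k and ℓ be positive integers with k sufficiently large as a function of ℓ, and let D be a 2k^{ℓ+1}-regular digraph. Then there exists a subdigraph D' of D with minimum out-degree at least k such that the underlying undirected graph of D' contains no cycle of length ℓ. -/
open Digraph'

/-- `D` is a `d`-regular digraph: every vertex has in- and out-degree `d`. -/
def IsRegularDigraph {α : Type} (D : Digraph' α) (d : ℕ) : Prop :=
  ∀ v ∈ D.verts, ((D.outNbrs v).Finite ∧ (D.outNbrs v).ncard = d) ∧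
    ((D.inNbrs v).Finite ∧ (D.inNbrs v).ncard = d)

/-- The underlying undirected graph of `D` contains a cycle of length `n`. -/
def HasUCycle {α : Type} (D : Digraph' α) (n : ℕ) : Prop :=
  3 ≤ n ∧ ∃ f : ℕ → α, (∀ i j, i < n → j < n → f i = f j → i = j) ∧
    (∀ i, i < n → f i ∈ D.verts) ∧
    ∀ i, i < n → (D.Adj (f i) (f ((i + 1) % n)) ∨ D.Adj (f ((i + 1) % n)) (f i))

/-!
Keep, at every vertex, a uniformly random `k`-subset of its `d = 2k^(ℓ+1)` out-arcs,
independently. An oriented `ℓ`-cycle of `D` (an `ℓ`-cycle of the underlying graph with its arcs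
oriented as in `D`) survives with probability at most `(k/d)^ℓ` and depends only on the choices
at its tails. As the underlying graph has degree at most `2d`, at most `ℓ (2d)^(ℓ-1) 2^ℓ`
oriented `ℓ`-cycles pass through a given vertex, so each one depends on at most
`ℓ² (2d)^(ℓ-1) 2^ℓ` of them. For `k ≥ ℓ² 4^ℓ` the symmetric Lovász local lemma therefore kills
every oriented `ℓ`-cycle on a finite vertex set, and Rado's selection principle (compactness)
extends this to all of `D`.
-/

open Finset

section LovaszLocalLemma

variable {Ω σ : Type*} [Fintype Ω] [DecidableEq Ω] (A : σ → Finset Ω)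

def avoiding (S : Finset σ) : Finset Ω := {ω | ∀ s ∈ S, ω ∉ A s}

variable {A}

lemma mem_avoiding {S : Finset σ} {ω : Ω} : ω ∈ avoiding A S ↔ ∀ s ∈ S, ω ∉ A s := by
  simp [avoiding]

@[simp] lemma avoiding_empty : avoiding A ∅ = univ := by
  ext; simp [mem_avoiding]

lemma avoiding_anti {S S' : Finset σ} (h : S ⊆ S') : avoiding A S' ⊆ avoiding A S :=
  fun _ hω => mem_avoiding.2 fun s hs => mem_avoiding.1 hω s (h hs)

variable [DecidableEq σ]

lemma card_avoiding_insert_add (j : σ) (S : Finset σ) :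
    #(avoiding A (insert j S)) + #(A j ∩ avoiding A S) = #(avoiding A S) := by
  have : avoiding A (insert j S) = avoiding A S \ A j := by
    ext ω; simp [mem_avoiding, and_comm]
  rw [this, inter_comm, card_sdiff_add_card_inter]

lemma pow_mul_card_avoiding_le {x : ℚ} (hx : x ≤ 1) (S : Finset σ) {R : Finset σ}
    (hR : ∀ j ∈ R, ∀ R' ⊆ R, j ∉ R' →
      (#(A j ∩ avoiding A (S ∪ R')) : ℚ) ≤ x * #(avoiding A (S ∪ R'))) :
    (1 - x) ^ #R * #(avoiding A S) ≤ #(avoiding A (S ∪ R)) := by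
  induction R using Finset.induction_on with
  | empty => simp
  | insert j R hjR ih =>
    have hsplit : (#(avoiding A (insert j (S ∪ R))) : ℚ) + #(A j ∩ avoiding A (S ∪ R))
        = #(avoiding A (S ∪ R)) := by exact_mod_cast card_avoiding_insert_add j (S ∪ R)
    have hj := hR j (mem_insert_self j R) R (subset_insert j R) hjR
    have ih := ih fun i hi R' hR' =>
      hR i (mem_insert_of_mem hi) R' (hR'.trans (subset_insert j R))
    rw [union_insert, card_insert_of_notMem hjR, pow_succ]
    calc (1 - x) ^ #R * (1 - x) * #(avoiding A S)
        = (1 - x) * ((1 - x) ^ #R * #(avoiding A S)) := by ring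
      _ ≤ (1 - x) * #(avoiding A (S ∪ R)) := mul_le_mul_of_nonneg_left ih (by linarith)
      _ ≤ #(avoiding A (insert j (S ∪ R))) := by linarith

lemma one_half_le_one_sub_inv_pow {M r : ℕ} (hM : 1 ≤ M) (hr : r ≤ M) :
    (1 : ℚ) / 2 ≤ (1 - (2 * M : ℚ)⁻¹) ^ r := by
  have hMq : (1 : ℚ) ≤ M := by exact_mod_cast hM
  have hrq : (r : ℚ) ≤ M := by exact_mod_cast hr
  have hx : (2 * M : ℚ)⁻¹ ≤ 1 := inv_le_one_of_one_le₀ (by linarith)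
  have hrx : (r : ℚ) * (2 * M : ℚ)⁻¹ ≤ 1 / 2 := by
    rw [← div_eq_mul_inv, div_le_iff₀ (by positivity)]; linarith
  have := one_add_mul_le_pow (a := -(2 * M : ℚ)⁻¹) (by linarith) r
  rw [← sub_eq_add_neg] at this
  linarith

variable [Nonempty Ω] {I : Finset σ} {Dep : σ → σ → Prop} [DecidableRel Dep] {M : ℕ}

/-- The inductive claim in the proof of the local lemma. -/
lemma card_inter_avoiding_le (hM : 1 ≤ M)
    (hindep : ∀ s ∈ I, ∀ R ⊆ I, (∀ j ∈ R, ¬ Dep s j) →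
      #(A s ∩ avoiding A R) * Fintype.card Ω ≤ #(A s) * #(avoiding A R))
    (hdeg : ∀ s ∈ I, #{j ∈ I | Dep s j} ≤ M)
    (hprob : ∀ s ∈ I, 4 * M * #(A s) ≤ Fintype.card Ω) :
    ∀ S ⊆ I, ∀ s ∈ I, (#(A s ∩ avoiding A S) : ℚ) ≤ (2 * M : ℚ)⁻¹ * #(avoiding A S) := by
  intro S
  induction S using Finset.strongInduction with
  | H S ih =>
  intro hSI s hs
  set S₁ := {j ∈ S | Dep s j}
  set S₂ := {j ∈ S | ¬ Dep s j}
  have hS₂I : S₂ ⊆ I := (filter_subset _ _).trans hSI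
  -- Each of the at most `M` events of `S₁` costs a factor `1 - 1/2M`, and `(1 - 1/2M)^M ≥ 1/2`.
  have hhalf : (#(avoiding A S₂) : ℚ) ≤ 2 * #(avoiding A S) := by
    have hpeel := pow_mul_card_avoiding_le (A := A) (x := (2 * M : ℚ)⁻¹)
      (inv_le_one_of_one_le₀ (by norm_cast; omega)) S₂ (R := S₁) fun j hj R' hR' hjR' => by
        obtain ⟨hjS, hjs⟩ := mem_filter.1 hj
        refine ih _ ?_ (union_subset hS₂I (hR'.trans ((filter_subset _ _).trans hSI))) j (hSI hjS)
        refine (ssubset_iff_of_subset (union_subset (filter_subset _ _)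
          (hR'.trans (filter_subset _ _)))).2 ⟨j, hjS, ?_⟩
        simp [hjs, hjR']
    rw [union_comm, filter_union_filter_not_eq] at hpeel
    have := one_half_le_one_sub_inv_pow hM
      ((card_le_card (filter_subset_filter _ hSI)).trans (hdeg s hs))
    have : (0 : ℚ) ≤ #(avoiding A S₂) := by positivity
    nlinarith
  have hind : (#(A s ∩ avoiding A S₂) : ℚ) * Fintype.card Ω ≤ #(A s) * #(avoiding A S₂) := by
    exact_mod_cast hindep s hs S₂ hS₂I fun j hj => (mem_filter.1 hj).2
  have hp : 4 * (M : ℚ) * #(A s) ≤ Fintype.card Ω := by exact_mod_cast hprob s hs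
  have hmono : (#(A s ∩ avoiding A S) : ℚ) ≤ #(A s ∩ avoiding A S₂) := by
    exact_mod_cast card_le_card (inter_subset_inter_left (avoiding_anti (filter_subset _ _)))
  have hN : (0 : ℚ) < Fintype.card Ω := by exact_mod_cast Fintype.card_pos
  have hMq : (0 : ℚ) < M := by norm_cast
  rw [inv_mul_eq_div, le_div_iff₀ (by positivity)]
  refine le_of_mul_le_mul_right ?_ hN
  calc (#(A s ∩ avoiding A S) : ℚ) * (2 * M) * Fintype.card Ω
      ≤ #(A s ∩ avoiding A S₂) * Fintype.card Ω * (2 * M) := by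
        rw [mul_right_comm]; gcongr
    _ ≤ #(A s) * #(avoiding A S₂) * (2 * M) := by gcongr
    _ ≤ #(A s) * (2 * #(avoiding A S)) * (2 * M) := by gcongr
    _ = 4 * M * #(A s) * #(avoiding A S) := by ring
    _ ≤ #(avoiding A S) * Fintype.card Ω := by rw [mul_comm _ (Fintype.card Ω : ℚ)]; gcongr

theorem lovasz_local_lemma (hM : 1 ≤ M)
    (hindep : ∀ s ∈ I, ∀ R ⊆ I, (∀ j ∈ R, ¬ Dep s j) →
      #(A s ∩ avoiding A R) * Fintype.card Ω ≤ #(A s) * #(avoiding A R))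
    (hdeg : ∀ s ∈ I, #{j ∈ I | Dep s j} ≤ M)
    (hprob : ∀ s ∈ I, 4 * M * #(A s) ≤ Fintype.card Ω) :
    ∃ ω, ∀ s ∈ I, ω ∉ A s := by
  have hx : (2 * M : ℚ)⁻¹ < 1 := inv_lt_one_of_one_lt₀ (by norm_cast; omega)
  have hpos := pow_mul_card_avoiding_le (A := A) hx.le ∅ (R := I) fun j hj R' hR' _ => by
    simpa using card_inter_avoiding_le hM hindep hdeg hprob R' hR' j hj
  simp only [avoiding_empty, empty_union] at hpos
  obtain ⟨ω, hω⟩ : (avoiding A I).Nonempty := by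
    rw [← card_pos, ← Nat.cast_pos (α := ℚ)]
    refine lt_of_lt_of_le ?_ hpos
    have : (0 : ℚ) < 1 - (2 * M : ℚ)⁻¹ := by linarith
    have : (0 : ℚ) < #(univ : Finset Ω) := by exact_mod_cast card_pos.2 univ_nonempty
    positivity
  exact ⟨ω, mem_avoiding.1 hω⟩

end LovaszLocalLemma

section ProductSpace

variable {ι : Type*} [Fintype ι] [DecidableEq ι] {β : ι → Type*} [∀ i, Fintype (β i)]
  [∀ i, DecidableEq (β i)]

def IsDeterminedBy (A : Finset (∀ i, β i)) (P : Finset ι) : Prop :=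
  ∀ ⦃f g : ∀ i, β i⦄, (∀ i ∈ P, f i = g i) → f ∈ A → g ∈ A

lemma IsDeterminedBy.card_inter_mul {A B : Finset (∀ i, β i)} {P Q : Finset ι}
    (hA : IsDeterminedBy A P) (hB : IsDeterminedBy B Q) (hPQ : Disjoint P Q) :
    #(A ∩ B) * Fintype.card (∀ i, β i) = #A * #B := by
  have hP {f g : ∀ i, β i} : ∀ i ∈ P, f i = P.piecewise f g i := fun i hi =>
    (piecewise_eq_of_mem _ _ _ hi).symm
  have hQ {f g : ∀ i, β i} : ∀ i ∈ Q, f i = P.piecewise g f i := fun i hi =>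
    (piecewise_eq_of_notMem _ _ _ (disjoint_right.1 hPQ hi)).symm
  have hinv (f g : ∀ i, β i) : P.piecewise (P.piecewise f g) (P.piecewise g f) = f := by
    rw [piecewise_idem_left, piecewise_idem_right, piecewise_same]
  -- `(f, g) ↦ (P.piecewise f g, P.piecewise g f)` is an involution of `Ω × Ω` exchanging
  -- `(A ∩ B) × Ω` and `A × B`.
  rw [← card_univ, ← card_product, ← card_product]
  refine card_nbij' (fun p => (P.piecewise p.1 p.2, P.piecewise p.2 p.1))
    (fun p => (P.piecewise p.1 p.2, P.piecewise p.2 p.1)) ?_ ?_ ?_ ?_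
  · rintro ⟨f, g⟩ h
    simp only [coe_product, coe_inter, Set.mem_prod, Set.mem_inter_iff, mem_coe] at h ⊢
    exact ⟨hA hP h.1.1, hB hQ h.1.2⟩
  · rintro ⟨f, g⟩ h
    simp only [coe_product, coe_inter, Set.mem_prod, Set.mem_inter_iff, mem_coe, coe_univ,
      Set.mem_univ, and_true] at h ⊢
    exact ⟨hA hP h.1, hB hQ h.2⟩
  · rintro ⟨f, g⟩ -
    simp [hinv]
  · rintro ⟨f, g⟩ -
    simp [hinv]

lemma isDeterminedBy_avoiding {σ : Type*} {A : σ → Finset (∀ i, β i)} {E : σ → Finset ι}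
    {S : Finset σ} (h : ∀ s ∈ S, IsDeterminedBy (A s) (E s)) :
    IsDeterminedBy (avoiding A S) (S.biUnion E) := by
  intro f g hfg hf
  refine mem_avoiding.2 fun s hs hg => mem_avoiding.1 hf s hs (h s hs ?_ hg)
  exact fun i hi => (hfg i (mem_biUnion.2 ⟨s, hs, hi⟩)).symm

theorem lovasz_local_lemma_pi [∀ i, Nonempty (β i)] {σ : Type*} [DecidableEq σ]
    {I : Finset σ} {A : σ → Finset (∀ i, β i)} {E : σ → Finset ι}
    (hA : ∀ s ∈ I, IsDeterminedBy (A s) (E s)) {M : ℕ} (hM : 1 ≤ M)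
    (hdeg : ∀ s ∈ I, #{j ∈ I | ¬ Disjoint (E s) (E j)} ≤ M)
    (hprob : ∀ s ∈ I, 4 * M * #(A s) ≤ Fintype.card (∀ i, β i)) :
    ∃ ω, ∀ s ∈ I, ω ∉ A s := by
  refine lovasz_local_lemma hM (fun s hs R hRI hR => ?_) hdeg hprob
  rw [(hA s hs).card_inter_mul (isDeterminedBy_avoiding fun j hj => hA j (hRI hj))
    ((disjoint_biUnion_right _ _ _).2 fun j hj => not_not.1 (hR j hj))]

end ProductSpace

section RandomSubsets

lemma Nat.mul_le_of_mul_pow_le {M a N k d n : ℕ} (hd : 0 < d) (ha : a * d ^ n ≤ N * k ^ n)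
    (hM : M * k ^ n ≤ d ^ n) : M * a ≤ N := by
  refine Nat.le_of_mul_le_mul_right ?_ (pow_pos hd n)
  calc M * a * d ^ n = M * (a * d ^ n) := by ring
    _ ≤ M * (N * k ^ n) := Nat.mul_le_mul_left _ ha
    _ = N * (M * k ^ n) := by ring
    _ ≤ N * d ^ n := Nat.mul_le_mul_left _ hM

lemma Nat.descFactorial_mul_pow_le {k d : ℕ} (hkd : k ≤ d) (j : ℕ) :
    k.descFactorial j * d ^ j ≤ d.descFactorial j * k ^ j := by
  induction j with
  | zero => simp
  | succ j ih =>
    have hstep : (k - j) * d ≤ (d - j) * k := by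
      rcases le_total j k with hjk | hkj
      · zify [hjk, hjk.trans hkd]; nlinarith
      · simp [Nat.sub_eq_zero_of_le hkj]
    rw [Nat.descFactorial_succ, Nat.descFactorial_succ, pow_succ, pow_succ]
    calc (k - j) * k.descFactorial j * (d ^ j * d)
        = (k - j) * d * (k.descFactorial j * d ^ j) := by ring
      _ ≤ (d - j) * k * (d.descFactorial j * k ^ j) := Nat.mul_le_mul hstep ih
      _ = (d - j) * d.descFactorial j * (k ^ j * k) := by ring

/-- A uniform `k`-subset of a `d`-set contains a given `j`-subset with probability
`C(d-j, k-j) / C(d, k) ≤ (k/d)^j`. -/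
lemma Nat.choose_sub_mul_pow_le {j k d : ℕ} (hjk : j ≤ k) (hkd : k ≤ d) :
    (d - j).choose (k - j) * d ^ j ≤ d.choose k * k ^ j := by
  have hfall : k.choose j * d ^ j ≤ d.choose j * k ^ j := by
    have := Nat.descFactorial_mul_pow_le hkd j
    rw [Nat.descFactorial_eq_factorial_mul_choose, Nat.descFactorial_eq_factorial_mul_choose,
      mul_assoc, mul_assoc] at this
    exact Nat.le_of_mul_le_mul_left this (Nat.factorial_pos j)
  refine Nat.le_of_mul_le_mul_left ?_ (Nat.choose_pos (hjk.trans hkd))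
  calc d.choose j * ((d - j).choose (k - j) * d ^ j)
      = d.choose k * (k.choose j * d ^ j) := by rw [← mul_assoc, ← Nat.choose_mul hjk, mul_assoc]
    _ ≤ d.choose k * (d.choose j * k ^ j) := Nat.mul_le_mul_left _ hfall
    _ = d.choose j * (d.choose k * k ^ j) := by ring

lemma Finset.card_filter_powersetCard_superset_mul_pow_le {α : Type*} [DecidableEq α]
    {U J : Finset α} (hJU : J ⊆ U) {k : ℕ} (hk : k ≤ #U) :
    #{s ∈ U.powersetCard k | J ⊆ s} * #U ^ #J ≤ (#U).choose k * k ^ #J := by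
  by_cases hJk : #J ≤ k
  · rw [card_filter_powersetCard_subset J U k hJU hJk]
    exact Nat.choose_sub_mul_pow_le hJk hk
  · rw [filter_false_of_mem fun s hs hJs =>
      hJk ((card_le_card hJs).trans (mem_powersetCard.1 hs).2.le)]
    simp

lemma card_filter_forall_subset_mul_pow_le {ι α : Type*} [Fintype ι] [DecidableEq ι]
    [DecidableEq α] {U J : ι → Finset α} {k d : ℕ} (hU : ∀ i, #(U i) = d)
    (hJU : ∀ i, J i ⊆ U i) (hkd : k ≤ d) :
    #{g : ∀ i, (U i).powersetCard k | ∀ i, J i ⊆ g i} * d ^ ∑ i, #(J i)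
      ≤ Fintype.card (∀ i, (U i).powersetCard k) * k ^ ∑ i, #(J i) := by
  have hfilter : ({g : ∀ i, (U i).powersetCard k | ∀ i, J i ⊆ g i} : Finset _)
      = Fintype.piFinset fun i => {s : (U i).powersetCard k | J i ⊆ s} := by
    ext g; simp
  have hcard (i : ι) : #{s : (U i).powersetCard k | J i ⊆ s}
      = #{s ∈ (U i).powersetCard k | J i ⊆ s} := by
    rw [univ_eq_attach, filter_attach, card_map, card_attach]
  rw [hfilter, Fintype.card_piFinset, Fintype.card_pi, ← prod_pow_eq_pow_sum,
    ← prod_pow_eq_pow_sum, ← prod_mul_distrib, ← prod_mul_distrib]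
  refine prod_le_prod' fun i _ => ?_
  rw [hcard, Fintype.card_coe, card_powersetCard, ← hU i]
  exact card_filter_powersetCard_superset_mul_pow_le (hJU i) (hU i ▸ hkd)

end RandomSubsets

section Walks

variable {α : Type*} [DecidableEq α] (N : α → Finset α)

def walkFinset : (n : ℕ) → α → Finset (Fin (n + 1) → α)
  | 0, v => {fun _ => v}
  | n + 1, v => (N v).biUnion fun u => (walkFinset n u).image (Fin.cons v)

variable {N}

lemma card_walkFinset_le {B : ℕ} (hB : ∀ v, #(N v) ≤ B) (n : ℕ) (v : α) :
    #(walkFinset N n v) ≤ B ^ n := by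
  induction n generalizing v with
  | zero => simp [walkFinset]
  | succ n ih =>
    rw [walkFinset, pow_succ']
    refine card_biUnion_le.trans ?_
    calc ∑ u ∈ N v, #((walkFinset N n u).image _)
        ≤ ∑ _u ∈ N v, B ^ n := sum_le_sum fun u _ => card_image_le.trans (ih u)
      _ ≤ B * B ^ n := by rw [sum_const, smul_eq_mul]; gcongr; exact hB v

lemma mem_walkFinset {n : ℕ} {f : Fin (n + 1) → α}
    (hf : ∀ i : Fin n, f i.succ ∈ N (f i.castSucc)) : f ∈ walkFinset N n (f 0) := by
  induction n with
  | zero => simp [walkFinset, funext_iff, Fin.fin_one_eq_zero]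
  | succ n ih =>
    rw [walkFinset, mem_biUnion]
    refine ⟨f 1, hf 0, mem_image.2 ⟨Fin.tail f, ?_, Fin.cons_self_tail f⟩⟩
    exact ih fun i => hf i.succ

end Walks

lemma Fin.add_one_add_one_ne {n : ℕ} [NeZero n] (hn : 3 ≤ n) (i : Fin n) : i + 1 + 1 ≠ i := by
  rw [add_assoc, Ne, add_eq_left, Fin.ext_iff, Fin.val_add, Fin.val_one', Fin.val_zero,
    Nat.mod_eq_of_lt (by omega : 1 < n), Nat.mod_eq_of_lt (by omega : 1 + 1 < n)]
  omega

namespace OrientedCycle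

variable {α : Type*} {n : ℕ} [NeZero n]

/-- In an oriented cycle `c`, the `i`-th arc joins `c.1 i` and `c.1 (i + 1)`, and points
forwards iff `c.2 i`. -/
def tail (c : (Fin n → α) × (Fin n → Bool)) (i : Fin n) : α :=
  if c.2 i then c.1 i else c.1 (i + 1)

def head (c : (Fin n → α) × (Fin n → Bool)) (i : Fin n) : α :=
  if c.2 i then c.1 (i + 1) else c.1 i

lemma exists_vert_eq_tail (c : (Fin n → α) × (Fin n → Bool)) (i : Fin n) :
    ∃ p, c.1 p = tail c i := by
  unfold tail; split
  exacts [⟨i, rfl⟩, ⟨i + 1, rfl⟩]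

lemma tail_or_head_eq (c : (Fin n → α) × (Fin n → Bool)) (i : Fin n) :
    tail c i = c.1 i ∧ head c i = c.1 (i + 1) ∨ tail c i = c.1 (i + 1) ∧ head c i = c.1 i := by
  unfold tail head; split <;> simp

variable [DecidableEq α]

def headsFrom (c : (Fin n → α) × (Fin n → Bool)) (w : α) : Finset α :=
  ({i | tail c i = w} : Finset (Fin n)).image (head c)

def tailsIn (T : Finset α) (c : (Fin n → α) × (Fin n → Bool)) : Finset T :=
  {w | ∃ i, tail c i = w}

lemma headsFrom_eq_empty {c : (Fin n → α) × (Fin n → Bool)} {T : Finset α} {w : T}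
    (hw : w ∉ tailsIn T c) : headsFrom c w = ∅ := by
  simp_all [headsFrom, tailsIn]

lemma card_tailsIn_le (T : Finset α) (c : (Fin n → α) × (Fin n → Bool)) :
    #(tailsIn T c) ≤ n := by
  calc #(tailsIn T c) ≤ #((univ : Finset (Fin n)).image (tail c)) :=
        card_le_card_of_injOn Subtype.val (fun w hw => by
          obtain ⟨i, hi⟩ := (mem_filter.1 hw).2
          exact mem_image.2 ⟨i, mem_univ _, hi⟩) Subtype.val_injective.injOn
    _ ≤ n := card_image_le.trans (by simp)

end OrientedCycle

namespace Digraph'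

open OrientedCycle Function

variable {α : Type}

section OrientedCycles

variable (D : Digraph' α)

def IsOrientedCycle {n : ℕ} [NeZero n] (c : (Fin n → α) × (Fin n → Bool)) : Prop :=
  Injective c.1 ∧ ∀ i, D.Adj (tail c i) (head c i)

def nbrFinset [DecidableEq α] [∀ v, Fintype (D.outNbrs v)] [∀ v, Fintype (D.inNbrs v)] (v : α) :
    Finset α :=
  (D.outNbrs v).toFinset ∪ (D.inNbrs v).toFinset

variable {D} {n : ℕ} [NeZero n] {c : (Fin n → α) × (Fin n → Bool)}

lemma IsOrientedCycle.injective_arc (hn : 3 ≤ n) (hc : D.IsOrientedCycle c) :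
    Injective fun i => (tail c i, head c i) := by
  intro i j h
  have hne := Fin.add_one_add_one_ne hn
  simp only [Prod.ext_iff] at h
  rcases tail_or_head_eq c i with ⟨hti, hhi⟩ | ⟨hti, hhi⟩ <;>
    rcases tail_or_head_eq c j with ⟨htj, hhj⟩ | ⟨htj, hhj⟩ <;>
    rw [hti, hhi, htj, hhj] at h
  · exact hc.1 h.1
  · have := hc.1 h.2; rw [hc.1 h.1] at this; exact absurd this (hne j)
  · have := hc.1 h.1; rw [hc.1 h.2] at this; exact absurd this (hne j)
  · exact add_right_cancel (hc.1 h.1)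

lemma IsOrientedCycle.vert_add_one_mem_nbrFinset [DecidableEq α] [∀ v, Fintype (D.outNbrs v)]
    [∀ v, Fintype (D.inNbrs v)] (hc : D.IsOrientedCycle c) (i : Fin n) :
    c.1 (i + 1) ∈ D.nbrFinset (c.1 i) := by
  have := hc.2 i
  rcases tail_or_head_eq c i with ⟨ht, hh⟩ | ⟨ht, hh⟩ <;> rw [ht, hh] at this
  · exact mem_union_left _ (Set.mem_toFinset.2 this)
  · exact mem_union_right _ (Set.mem_toFinset.2 this)

section Counting

variable [∀ v, Fintype (D.outNbrs v)] [∀ v, Fintype (D.inNbrs v)] [DecidableEq α] {m B : ℕ}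
  {Cyc : Finset ((Fin (m + 1) → α) × (Fin (m + 1) → Bool))}

/-- Rotating an oriented cycle to start at position `p` gives a walk from `c.1 p`. -/
lemma card_filter_vert_eq_le (hCyc : ∀ c ∈ Cyc, D.IsOrientedCycle c)
    (hB : ∀ v, #(D.nbrFinset v) ≤ B) (p : Fin (m + 1)) (v : α) :
    #{c ∈ Cyc | c.1 p = v} ≤ B ^ m * 2 ^ (m + 1) := by
  have hrot : ∀ c ∈ Cyc, c.1 p = v →
      (fun t => c.1 (p + t)) ∈ walkFinset D.nbrFinset m v := by
    intro c hc hcv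
    have := mem_walkFinset (N := D.nbrFinset) (f := fun t => c.1 (p + t)) fun t => by
      rw [← Fin.coeSucc_eq_succ, ← add_assoc]
      exact (hCyc c hc).vert_add_one_mem_nbrFinset _
    simpa [hcv] using this
  calc #{c ∈ Cyc | c.1 p = v}
      ≤ #(walkFinset D.nbrFinset m v ×ˢ (univ : Finset (Fin (m + 1) → Bool))) := by
        refine card_le_card_of_injOn (fun c => (fun t => c.1 (p + t), c.2)) (fun c hc => ?_) ?_
        · simp only [mem_coe, mem_filter] at hc
          exact mem_product.2 ⟨hrot c hc.1 hc.2, mem_univ _⟩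
        · intro c _ c' _ h
          simp only [Prod.ext_iff, funext_iff] at h
          refine Prod.ext (funext fun i => ?_) (funext h.2)
          simpa using h.1 (i - p)
    _ ≤ B ^ m * 2 ^ (m + 1) := by
        rw [card_product, card_univ, Fintype.card_fun, Fintype.card_bool, Fintype.card_fin]
        gcongr
        exact card_walkFinset_le hB m v

lemma card_filter_exists_vert_eq_le (hCyc : ∀ c ∈ Cyc, D.IsOrientedCycle c)
    (hB : ∀ v, #(D.nbrFinset v) ≤ B) (v : α) :
    #{c ∈ Cyc | ∃ p, c.1 p = v} ≤ (m + 1) * (B ^ m * 2 ^ (m + 1)) := by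
  calc #{c ∈ Cyc | ∃ p, c.1 p = v}
      ≤ #((univ : Finset (Fin (m + 1))).biUnion fun p => {c ∈ Cyc | c.1 p = v}) := by
        refine card_le_card fun c hc => ?_
        obtain ⟨hc, p, hp⟩ := mem_filter.1 hc
        exact mem_biUnion.2 ⟨p, mem_univ _, mem_filter.2 ⟨hc, hp⟩⟩
    _ ≤ ∑ p : Fin (m + 1), #{c ∈ Cyc | c.1 p = v} := card_biUnion_le
    _ ≤ ∑ _p : Fin (m + 1), B ^ m * 2 ^ (m + 1) :=
        sum_le_sum fun p _ => card_filter_vert_eq_le hCyc hB p v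
    _ = (m + 1) * (B ^ m * 2 ^ (m + 1)) := by simp

end Counting

end OrientedCycles

section Selection

variable {D : Digraph' α} [DecidableEq α] {n : ℕ} [NeZero n] {c : (Fin n → α) × (Fin n → Bool)}

lemma IsOrientedCycle.sum_card_headsFrom (hn : 3 ≤ n) (hc : D.IsOrientedCycle c)
    {T : Finset α} (hT : ∀ i, tail c i ∈ T) : ∑ w : T, #(headsFrom c w) = n := by
  have hcard (w : α) : #(headsFrom c w) = #{i | tail c i = w} :=
    card_image_of_injOn (f := head c) fun i hi j hj h => hc.injective_arc hn <| Prod.ext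
      ((mem_filter.1 hi).2.trans (mem_filter.1 hj).2.symm) h
  simp only [hcard]
  rw [sum_coe_sort T fun w => #{i | tail c i = w}, ← card_eq_sum_card_fiberwise fun i _ => hT i,
    card_univ, Fintype.card_fin]

variable [∀ v, Fintype (D.outNbrs v)]

lemma IsOrientedCycle.headsFrom_subset (hc : D.IsOrientedCycle c) (w : α) :
    headsFrom c w ⊆ (D.outNbrs w).toFinset := by
  intro u hu
  obtain ⟨i, hi, rfl⟩ := mem_image.1 hu
  rw [← (mem_filter.1 hi).2, Set.mem_toFinset]
  exact hc.2 i

variable (D) in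
abbrev Selection (T : Finset α) (k : ℕ) : Type :=
  ∀ w : T, (D.outNbrs w).toFinset.powersetCard k

variable (D) in
def selectionsKeeping (T : Finset α) (k : ℕ) (c : (Fin n → α) × (Fin n → Bool)) :
    Finset (D.Selection T k) :=
  {g | ∀ w : T, headsFrom c w ⊆ g w}

variable {T : Finset α} {k d : ℕ}

lemma isDeterminedBy_selectionsKeeping :
    IsDeterminedBy (D.selectionsKeeping T k c) (tailsIn T c) := by
  intro f g hfg hf
  refine mem_filter.2 ⟨mem_univ _, fun w => ?_⟩
  by_cases hw : w ∈ tailsIn T c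
  · exact hfg w hw ▸ (mem_filter.1 hf).2 w
  · simp [headsFrom_eq_empty hw]

lemma IsOrientedCycle.card_selectionsKeeping_mul_pow_le (hn : 3 ≤ n) (hc : D.IsOrientedCycle c)
    (hT : ∀ i, tail c i ∈ T) (hd : ∀ w ∈ T, #(D.outNbrs w).toFinset = d) (hkd : k ≤ d) :
    #(D.selectionsKeeping T k c) * d ^ n ≤ Fintype.card (D.Selection T k) * k ^ n := by
  have := card_filter_forall_subset_mul_pow_le (U := fun w : T => (D.outNbrs w).toFinset)
    (J := fun w => headsFrom c w) (fun w => hd w w.2) (fun w => hc.headsFrom_subset w) hkd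
  rwa [hc.sum_card_headsFrom hn hT] at this

variable [∀ v, Fintype (D.inNbrs v)] {m B : ℕ}

lemma card_filter_not_disjoint_tailsIn_le
    {Cyc : Finset ((Fin (m + 1) → α) × (Fin (m + 1) → Bool))}
    (hCyc : ∀ c ∈ Cyc, D.IsOrientedCycle c) (hB : ∀ v, #(D.nbrFinset v) ≤ B)
    (c : (Fin (m + 1) → α) × (Fin (m + 1) → Bool)) :
    #{c' ∈ Cyc | ¬ Disjoint (tailsIn T c) (tailsIn T c')}
      ≤ (m + 1) * ((m + 1) * (B ^ m * 2 ^ (m + 1))) := by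
  calc #{c' ∈ Cyc | ¬ Disjoint (tailsIn T c) (tailsIn T c')}
      ≤ #((tailsIn T c).biUnion fun w => {c' ∈ Cyc | ∃ p, c'.1 p = w.1}) := by
        refine card_le_card fun c' hc' => ?_
        obtain ⟨hc', hdisj⟩ := mem_filter.1 hc'
        obtain ⟨w, hw, hw'⟩ := not_disjoint_iff.1 hdisj
        obtain ⟨i, hi⟩ := (mem_filter.1 hw').2
        obtain ⟨p, hp⟩ := exists_vert_eq_tail c' i
        exact mem_biUnion.2 ⟨w, hw, mem_filter.2 ⟨hc', p, hp.trans hi⟩⟩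
    _ ≤ ∑ w ∈ tailsIn T c, #{c' ∈ Cyc | ∃ p, c'.1 p = w.1} := card_biUnion_le
    _ ≤ ∑ _w ∈ tailsIn T c, (m + 1) * (B ^ m * 2 ^ (m + 1)) :=
        sum_le_sum fun w _ => card_filter_exists_vert_eq_le hCyc hB w
    _ ≤ (m + 1) * ((m + 1) * (B ^ m * 2 ^ (m + 1))) := by
        rw [sum_const, smul_eq_mul]; gcongr; exact card_tailsIn_le T c

/-- The finite case: an oriented `(m+1)`-cycle is kept with probability at most `(k/d)^(m+1)`
and shares a tail with at most `(m+1)² B^m 2^(m+1)` others, so the local lemma applies. -/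
lemma exists_selection_of_finset (hm : 2 ≤ m) (hk : 0 < k) (hkd : k ≤ d) (hB₀ : 0 < B)
    (hd : ∀ w ∈ T, #(D.outNbrs w).toFinset = d) (hB : ∀ v, #(D.nbrFinset v) ≤ B)
    (hkey : 4 * ((m + 1) * ((m + 1) * (B ^ m * 2 ^ (m + 1)))) * k ^ (m + 1) ≤ d ^ (m + 1))
    (Cyc : Finset ((Fin (m + 1) → α) × (Fin (m + 1) → Bool)))
    (hCyc : ∀ c ∈ Cyc, D.IsOrientedCycle c ∧ ∀ i, tail c i ∈ T) :
    ∃ σ : α → Finset α, (∀ v, σ v ⊆ (D.outNbrs v).toFinset) ∧ (∀ v ∈ T, #(σ v) = k) ∧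
      ∀ c ∈ Cyc, ∃ i, head c i ∉ σ (tail c i) := by
  have (w : T) : Nonempty ((D.outNbrs w).toFinset.powersetCard k) :=
    (powersetCard_nonempty.2 (hd w w.2 ▸ hkd)).to_subtype
  obtain ⟨g, hg⟩ := lovasz_local_lemma_pi (I := Cyc) (fun _ _ => isDeterminedBy_selectionsKeeping)
    (Nat.one_le_iff_ne_zero.2 (by positivity))
    (fun c _ => card_filter_not_disjoint_tailsIn_le (fun c hc => (hCyc c hc).1) hB c)
    fun c hc => Nat.mul_le_of_mul_pow_le (hk.trans_le hkd)
      ((hCyc c hc).1.card_selectionsKeeping_mul_pow_le (by omega) (hCyc c hc).2 hd hkd) hkey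
  refine ⟨fun v => if h : v ∈ T then g ⟨v, h⟩ else ∅, fun v => ?_, fun v hv => ?_, fun c hc => ?_⟩
  · dsimp only
    split
    · exact (mem_powersetCard.1 (g _).2).1
    · exact empty_subset _
  · simp only [hv, dite_true]
    exact (mem_powersetCard.1 (g _).2).2
  · obtain ⟨w, hw⟩ : ∃ w : T, ¬ headsFrom c w ⊆ g w := by
      simpa [selectionsKeeping] using hg c hc
    obtain ⟨u, hu, hug⟩ := not_subset.1 hw
    obtain ⟨i, hi, rfl⟩ := mem_image.1 hu
    refine ⟨i, ?_⟩
    dsimp only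
    rwa [(mem_filter.1 hi).2, dif_pos w.2]

/-- Selections on finite vertex sets are glued together by Rado's selection principle, a
compactness argument: each constraint involves only finitely many vertices. -/
theorem exists_selection (hm : 2 ≤ m) (hk : 0 < k) (hkd : k ≤ d) (hB₀ : 0 < B)
    (hout : ∀ v ∈ D.verts, #(D.outNbrs v).toFinset = d) (hB : ∀ v, #(D.nbrFinset v) ≤ B)
    (hkey : 4 * ((m + 1) * ((m + 1) * (B ^ m * 2 ^ (m + 1)))) * k ^ (m + 1) ≤ d ^ (m + 1)) :
    ∃ σ : α → Finset α, (∀ v, σ v ⊆ (D.outNbrs v).toFinset) ∧ (∀ v ∈ D.verts, #(σ v) = k) ∧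
      ∀ c : (Fin (m + 1) → α) × (Fin (m + 1) → Bool), D.IsOrientedCycle c →
        ∃ i, head c i ∉ σ (tail c i) := by
  classical
  have hfin (t : Finset α) := exists_selection_of_finset (T := {v ∈ t | v ∈ D.verts}) hm hk hkd
    hB₀ (fun w hw => hout w (mem_filter.1 hw).2) hB hkey
    {c ∈ (Fintype.piFinset fun _ => t) ×ˢ univ | D.IsOrientedCycle c} fun c hc => by
      obtain ⟨hct, hc⟩ := mem_filter.1 hc
      refine ⟨hc, fun i => mem_filter.2 ⟨?_, D.mem_verts_left (hc.2 i)⟩⟩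
      obtain ⟨p, hp⟩ := exists_vert_eq_tail c i
      exact hp ▸ Fintype.mem_piFinset.1 (mem_product.1 hct).1 p
  choose σ hσsub hσcard hσcyc using hfin
  obtain ⟨χ, hχ⟩ := Finset.rado_selection (β := fun v => (D.outNbrs v).toFinset.powerset)
    fun t v => ⟨σ t v, mem_powerset.2 (hσsub t v)⟩
  refine ⟨fun v => χ v, fun v => mem_powerset.1 (χ v).2, fun v hv => ?_, fun c hc => ?_⟩
  · obtain ⟨t, hvt, hχt⟩ := hχ {v}
    dsimp only
    rw [hχt v (mem_singleton_self v)]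
    exact hσcard t v (mem_filter.2 ⟨hvt (mem_singleton_self v), hv⟩)
  · obtain ⟨t, hct, hχt⟩ := hχ (univ.image c.1)
    obtain ⟨i, hi⟩ := hσcyc t c (mem_filter.2 ⟨mem_product.2
      ⟨Fintype.mem_piFinset.2 fun p => hct (mem_image_of_mem _ (mem_univ p)), mem_univ _⟩, hc⟩)
    obtain ⟨p, hp⟩ := exists_vert_eq_tail c i
    refine ⟨i, ?_⟩
    dsimp only
    rw [hχt _ (mem_image.2 ⟨p, mem_univ _, hp⟩)]
    exact hi

end Selection

section Subdigraph

variable {D : Digraph' α}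

def restrictOut (D : Digraph' α) (σ : α → Finset α) : Digraph' α where
  verts := D.verts
  Adj u v := D.Adj u v ∧ v ∈ σ u
  ne_of_adj _ _ h := D.ne_of_adj h.1
  mem_verts_left _ _ h := D.mem_verts_left h.1
  mem_verts_right _ _ h := D.mem_verts_right h.1

lemma restrictOut_isSubdigraph (σ : α → Finset α) : (D.restrictOut σ).IsSubdigraph D :=
  ⟨subset_rfl, fun _ _ h => h.1⟩

lemma minOutDegAtLeast_restrictOut [∀ v, Fintype (D.outNbrs v)] {σ : α → Finset α} {k : ℕ}
    (hσ : ∀ v, σ v ⊆ (D.outNbrs v).toFinset) (hk : ∀ v ∈ D.verts, k ≤ #(σ v)) :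
    (D.restrictOut σ).MinOutDegAtLeast k :=
  fun v hv => ⟨σ v, fun _ hu => ⟨(Set.mem_toFinset (s := D.outNbrs v)).1 (hσ v hu), hu⟩, hk v hv⟩

lemma HasUCycle.exists_isOrientedCycle {n : ℕ} [NeZero n] (h : HasUCycle D n) :
    ∃ c : (Fin n → α) × (Fin n → Bool), D.IsOrientedCycle c := by
  obtain ⟨-, f, hinj, -, hadj⟩ := h
  classical
  refine ⟨(fun i => f i, fun i => decide (D.Adj (f i) (f ↑(i + 1)))), fun i j h =>
    Fin.ext (hinj i j i.2 j.2 h), fun i => ?_⟩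
  have hsucc : ((i + 1 : Fin n) : ℕ) = (i + 1) % n := by
    rw [Fin.val_add, Fin.val_one', Nat.add_mod_mod]
  by_cases hi : D.Adj (f i) (f ↑(i + 1))
  · simp [tail, head, hi]
  · have := hadj i i.2
    rw [← hsucc] at this
    simpa [tail, head, hi] using this.resolve_left hi

lemma IsOrientedCycle.of_restrictOut {n : ℕ} [NeZero n] {σ : α → Finset α}
    {c : (Fin n → α) × (Fin n → Bool)} (hc : (D.restrictOut σ).IsOrientedCycle c) :
    D.IsOrientedCycle c ∧ ∀ i, head c i ∈ σ (tail c i) :=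
  ⟨⟨hc.1, fun i => (hc.2 i).1⟩, fun i => (hc.2 i).2⟩

end Subdigraph

end Digraph'

namespace IsRegularDigraph

open Digraph'

variable {α : Type} {D : Digraph' α} {d : ℕ}

lemma finite_outNbrs (hD : IsRegularDigraph D d) (v : α) : (D.outNbrs v).Finite := by
  by_cases hv : v ∈ D.verts
  · exact (hD v hv).1.1
  · exact Set.finite_empty.subset fun u hu => hv (D.mem_verts_left hu)

lemma finite_inNbrs (hD : IsRegularDigraph D d) (v : α) : (D.inNbrs v).Finite := by
  by_cases hv : v ∈ D.verts
  · exact (hD v hv).2.1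
  · exact Set.finite_empty.subset fun u hu => hv (D.mem_verts_right hu)

lemma minOutDegAtLeast (hD : IsRegularDigraph D d) {k : ℕ} (hkd : k ≤ d) :
    D.MinOutDegAtLeast k :=
  fun v hv => ⟨(hD.finite_outNbrs v).toFinset, (hD.finite_outNbrs v).coe_toFinset.subset, by
    rw [← Set.ncard_eq_toFinset_card _ (hD.finite_outNbrs v), (hD v hv).1.2]; exact hkd⟩

variable [∀ v, Fintype (D.outNbrs v)]

lemma card_toFinset_outNbrs (hD : IsRegularDigraph D d) {v : α} (hv : v ∈ D.verts) :
    #(D.outNbrs v).toFinset = d := by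
  rw [← Set.ncard_eq_toFinset_card', (hD v hv).1.2]

lemma card_nbrFinset_le [∀ v, Fintype (D.inNbrs v)] [DecidableEq α]
    (hD : IsRegularDigraph D d) (v : α) : #(D.nbrFinset v) ≤ 2 * d := by
  by_cases hv : v ∈ D.verts
  · refine (card_union_le _ _).trans_eq ?_
    rw [← Set.ncard_eq_toFinset_card', ← Set.ncard_eq_toFinset_card', (hD v hv).1.2,
      (hD v hv).2.2, two_mul]
  · have hout : (D.outNbrs v).toFinset = ∅ := Set.toFinset_eq_empty.2 <|
      Set.eq_empty_of_forall_notMem fun _ hu => hv (D.mem_verts_left hu)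
    have hin : (D.inNbrs v).toFinset = ∅ := Set.toFinset_eq_empty.2 <|
      Set.eq_empty_of_forall_notMem fun _ hu => hv (D.mem_verts_right hu)
    simp [nbrFinset, hout, hin]

end IsRegularDigraph

/-- For `d = 2k^(m+2)` and `B = 2d` the local lemma's condition reduces to
`(m+1)² 4^(m+1) ≤ k`. -/
lemma lll_condition {m k : ℕ} (hk : (m + 1) ^ 2 * 4 ^ (m + 1) ≤ k) :
    4 * ((m + 1) * ((m + 1) * ((2 * (2 * k ^ (m + 2))) ^ m * 2 ^ (m + 1)))) * k ^ (m + 1)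
      ≤ (2 * k ^ (m + 2)) ^ (m + 1) := by
  set d := 2 * k ^ (m + 2) with hd
  calc 4 * ((m + 1) * ((m + 1) * ((2 * d) ^ m * 2 ^ (m + 1)))) * k ^ (m + 1)
      = d ^ m * (2 * ((m + 1) ^ 2 * 4 ^ (m + 1) * k ^ (m + 1))) := by
        rw [mul_pow, pow_succ 2 m, show (4 : ℕ) ^ (m + 1) = 2 ^ m * 2 ^ m * 4 by
          rw [← mul_pow, pow_succ]; norm_num]
        ring
    _ ≤ d ^ m * (2 * (k * k ^ (m + 1))) := by gcongr
    _ = d ^ (m + 1) := by rw [pow_succ, hd]; ring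

/-- For `k` sufficiently large as a function of `ℓ`, every `2k^{ℓ+1}`-regular
digraph contains a subdigraph of minimum out-degree at least `k` whose
underlying undirected graph has no cycle of length `ℓ`. -/
theorem regular_cycle_avoidance :
    ∀ ℓ : ℕ, 1 ≤ ℓ → ∃ k₀ : ℕ, ∀ k : ℕ, k₀ ≤ k →
      ∀ (α : Type) (D : Digraph' α), D.verts.Nonempty →
        IsRegularDigraph D (2 * k ^ (ℓ + 1)) →
        ∃ D' : Digraph' α, D'.IsSubdigraph D ∧ D'.verts.Nonempty ∧
          D'.MinOutDegAtLeast k ∧ ¬ HasUCycle D' ℓ := by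
  intro ℓ _
  rcases lt_or_ge ℓ 3 with hℓ | hℓ
  · refine ⟨0, fun k _ α D hne hD => ⟨D, ⟨subset_rfl, fun _ _ h => h⟩, hne, ?_, fun h => ?_⟩⟩
    · exact hD.minOutDegAtLeast
        ((Nat.le_self_pow (by omega) k).trans (Nat.le_mul_of_pos_left _ two_pos))
    · exact absurd h.1 (by omega)
  obtain ⟨m, rfl⟩ : ∃ m, ℓ = m + 1 := ⟨ℓ - 1, by omega⟩
  refine ⟨(m + 1) ^ 2 * 4 ^ (m + 1), fun k hk α D hne hD => ?_⟩
  classical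
  have hk₀ : 0 < k := lt_of_lt_of_le (by positivity) hk
  have hkd : k ≤ 2 * k ^ (m + 2) :=
    (Nat.le_self_pow (by omega) k).trans (Nat.le_mul_of_pos_left _ two_pos)
  let _ (v : α) : Fintype (D.outNbrs v) := (hD.finite_outNbrs v).fintype
  let _ (v : α) : Fintype (D.inNbrs v) := (hD.finite_inNbrs v).fintype
  obtain ⟨σ, hσsub, hσcard, hσcyc⟩ := exists_selection (D := D) (by omega) hk₀ hkd
    (by positivity) (fun v hv => hD.card_toFinset_outNbrs hv) hD.card_nbrFinset_le
    (lll_condition hk)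
  refine ⟨D.restrictOut σ, restrictOut_isSubdigraph σ, hne,
    minOutDegAtLeast_restrictOut hσsub fun v hv => (hσcard v hv).ge, fun h => ?_⟩
  obtain ⟨c, hc⟩ := h.exists_isOrientedCycle
  obtain ⟨i, hi⟩ := hσcyc c hc.of_restrictOut.1
  exact hi (hc.of_restrictOut.2 i)
end
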